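/- arXiv:1403.8147 — 7 statements merged into one kernel-verified Lean document; each statement's English description precedes it below -/
import Mathlib

section
/- For every positive integer d there exist constants k_d > 0 and C_d ≥ 0 with the following property: for every positive integer n and every set P of n points in general position in ℝ^d, there is a point of ℝ^d contained in at least k_d·binom(n, d+1) − C_d·n^d of the d-simplices spanned by (d+1)-element subsets of P. -/
/-!
By Helly's theorem, once `(d + 1) a < n` some point `p` lies in the convex hull of every subset
of `P` that misses at most `a` points. So one can greedily peel off `r ≈ n / (d + 1)^2` pairwise
disjoint subsets of `P`, each with at most `d + 1` points and with `p` in its hull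
(Carathéodory). By the colourful Carathéodory theorem every `d + 1` of these colour classes
carry a rainbow simplex containing `p`, and the classes can be read off the simplex, so `p` lies
in at least `choose r (d + 1)` simplices.

Colourful Carathéodory: take a rainbow simplex nearest to `p`. If it misses `p`, its point `q`
nearest to `p` lies on a facet avoiding some colour `i₀`; replacing the vertex of colour `i₀` by a
point of that colour strictly on `p`'s side of the hyperplane through `q` orthogonal to `p - q`
gives a rainbow simplex that still contains `q`, so by minimality `q` is still its point nearest
to `p` and the whole simplex lies on the far side of that hyperplane; its new vertex does not.
-/

open scoped Classical
open Finset Module Metric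
open scoped RealInnerProductSpace

section VectorSpace

variable {𝕜 E : Type*} [Field 𝕜] [AddCommGroup E] [Module 𝕜 E]

theorem AffineIndependent.card_le_finrank_vectorSpan_add_one {s : Finset E}
    (hs : AffineIndependent 𝕜 ((↑) : s → E)) : #s ≤ finrank 𝕜 (vectorSpan 𝕜 (s : Set E)) + 1 := by
  have h := hs.card_le_finrank_succ
  rwa [Fintype.card_coe, Subtype.range_coe_subtype, Finset.setOfPred_mem] at h

section FiniteDimensional

variable [FiniteDimensional 𝕜 E]

theorem AffineIndependent.card_le_finrank_add_one {s : Finset E}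
    (hs : AffineIndependent 𝕜 ((↑) : s → E)) : #s ≤ finrank 𝕜 E + 1 :=
  hs.card_le_finrank_vectorSpan_add_one.trans (Nat.add_le_add_right (Submodule.finrank_le _) 1)

theorem AffineIndependent.card_le_finrank_of_forall_eq {s : Finset E}
    (hs : AffineIndependent 𝕜 ((↑) : s → E)) {l : Dual 𝕜 E} (hl : l ≠ 0) {c : 𝕜}
    (hc : ∀ x ∈ s, l x = c) : #s ≤ finrank 𝕜 E := by
  have hspan : vectorSpan 𝕜 (s : Set E) ≤ LinearMap.ker l := by
    rw [vectorSpan_def, Submodule.span_le]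
    rintro _ ⟨x, hx, y, hy, rfl⟩
    simp [hc x hx, hc y hy]
  have := hs.card_le_finrank_vectorSpan_add_one
  have := Submodule.finrank_mono hspan
  have := Dual.finrank_ker_add_one_of_ne_zero hl
  omega

end FiniteDimensional

variable [LinearOrder 𝕜] [IsStrictOrderedRing 𝕜]

theorem mem_convexHull_filter_of_forall_le {s : Finset E} {q : E} (l : Dual 𝕜 E)
    (hq : q ∈ convexHull 𝕜 (s : Set E)) (hs : ∀ x ∈ s, l x ≤ l q) :
    q ∈ convexHull 𝕜 (s.filter (fun x => l x = l q) : Set E) := by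
  obtain ⟨w, hw₀, hw₁, hwq⟩ := Finset.mem_convexHull'.1 hq
  have hsum : ∑ x ∈ s, w x * (l q - l x) = 0 := by
    simp only [mul_sub, sum_sub_distrib, ← sum_mul, hw₁, one_mul]
    rw [sub_eq_zero, ← hwq, map_sum]
    simp only [map_smul, smul_eq_mul]
  have hw : ∀ x ∈ s, w x ≠ 0 → l x = l q := fun x hx hwx => by
    have := (Finset.sum_eq_zero_iff_of_nonneg fun y hy =>
      mul_nonneg (hw₀ y hy) (sub_nonneg.2 (hs y hy))).1 hsum x hx
    exact (sub_eq_zero.1 ((mul_eq_zero.1 this).resolve_left hwx)).symm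
  refine Finset.mem_convexHull'.2 ⟨w, fun x hx => hw₀ x (Finset.mem_filter.1 hx).1, ?_, ?_⟩
  · rwa [Finset.sum_filter_of_ne hw]
  · rwa [Finset.sum_filter_of_ne fun x hx h => hw x hx (left_ne_zero_of_smul h)]

variable [FiniteDimensional 𝕜 E]

theorem exists_mem_convexHull_image_compl {ι : Type*} [Fintype ι]
    (hι : finrank 𝕜 E < Fintype.card ι) (v : ι → E) {q : E} {l : Dual 𝕜 E} (hl : l ≠ 0)
    (hq : q ∈ convexHull 𝕜 (Set.range v)) (hv : ∀ i, l (v i) ≤ l q) :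
    ∃ i₀, q ∈ convexHull 𝕜 (v '' {i₀}ᶜ) := by
  have hT : ((univ.image v : Finset E) : Set E) = Set.range v := by simp
  have hface := mem_convexHull_filter_of_forall_le l (hT ▸ hq) (by simpa using hv)
  rw [convexHull_eq_union] at hface
  simp only [Set.mem_iUnion] at hface
  obtain ⟨S, hS, hSai, hqS⟩ := hface
  have hScard : #S ≤ finrank 𝕜 E :=
    hSai.card_le_finrank_of_forall_eq hl fun x hx => (mem_filter.1 (hS hx)).2
  suffices ∃ i₀, (S : Set E) ⊆ v '' {i₀}ᶜ from this.imp fun i₀ h => convexHull_mono h hqS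
  by_contra! h
  have key : ∀ i, v i ∈ S ∧ ∀ j, v j = v i → j = i := fun i => by
    obtain ⟨x, hxS, hx⟩ := Set.not_subset.1 (h i)
    obtain ⟨j, -, rfl⟩ := Finset.mem_image.1 (mem_filter.1 (hS hxS)).1
    obtain rfl : j = i := by_contra fun hji => hx ⟨j, hji, rfl⟩
    exact ⟨hxS, fun k hk => by_contra fun hkj => hx ⟨k, hkj, hk⟩⟩
  have := Finset.card_le_card_of_injOn (s := univ) v (fun i _ => (key i).1)
    fun i _ j _ hij => (key j).2 i hij
  rw [card_univ] at this
  omega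

theorem exists_forall_mem_convexHull_of_card_sdiff_le (P : Finset E) {a : ℕ}
    (ha : (finrank 𝕜 E + 1) * a < #P) :
    ∃ p : E, ∀ Q ⊆ P, #(P \ Q) ≤ a → p ∈ convexHull 𝕜 (Q : Set E) := by
  obtain ⟨p, hp⟩ : (⋂ Q ∈ P.powerset.filter (fun Q => #(P \ Q) ≤ a),
      convexHull 𝕜 (Q : Set E)).Nonempty := by
    refine Convex.helly_theorem' (fun _ _ => convex_convexHull 𝕜 _) fun I hI hIcard => ?_
    have hB : #(I.biUnion (P \ ·)) < #P := calc
      #(I.biUnion (P \ ·)) ≤ ∑ Q ∈ I, #(P \ Q) := card_biUnion_le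
      _ ≤ #I * a := sum_le_card_nsmul _ _ _ fun Q hQ => (mem_filter.1 (hI hQ)).2
      _ ≤ (finrank 𝕜 E + 1) * a := Nat.mul_le_mul_right a hIcard
      _ < #P := ha
    obtain ⟨x, hxP, hx⟩ := exists_mem_notMem_of_card_lt_card hB
    refine ⟨x, Set.mem_iInter₂.2 fun Q hQ => subset_convexHull 𝕜 _ ?_⟩
    by_contra hxQ
    exact hx (mem_biUnion.2 ⟨Q, hQ, mem_sdiff.2 ⟨hxP, hxQ⟩⟩)
  exact ⟨p, fun Q hQ hQa => Set.mem_iInter₂.1 hp Q (mem_filter.2 ⟨mem_powerset.2 hQ, hQa⟩)⟩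

theorem exists_pairwiseDisjoint_mem_convexHull {P : Finset E} {p : E} {a : ℕ}
    (hp : ∀ Q ⊆ P, #(P \ Q) ≤ a → p ∈ convexHull 𝕜 (Q : Set E)) {r : ℕ}
    (hr : (finrank 𝕜 E + 1) * r ≤ a + (finrank 𝕜 E + 1)) :
    ∃ 𝒢 : Finset (Finset E), #𝒢 = r ∧
      (∀ s ∈ 𝒢, s ⊆ P ∧ #s ≤ finrank 𝕜 E + 1 ∧ p ∈ convexHull 𝕜 (s : Set E)) ∧
      (𝒢 : Set (Finset E)).PairwiseDisjoint id := by
  induction r with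
  | zero => exact ⟨∅, by simp⟩
  | succ r ih =>
    obtain ⟨𝒢, h𝒢card, h𝒢, hdisj⟩ := ih (by linarith)
    set U := 𝒢.biUnion id
    have hU : #U ≤ a := calc
      #U ≤ ∑ s ∈ 𝒢, #s := card_biUnion_le
      _ ≤ #𝒢 * (finrank 𝕜 E + 1) := sum_le_card_nsmul _ _ _ fun s hs => (h𝒢 s hs).2.1
      _ ≤ a := by rw [h𝒢card]; linarith
    have hpU : p ∈ convexHull 𝕜 ((P \ U : Finset E) : Set E) :=
      hp _ sdiff_subset ((card_le_card (by simp [sdiff_sdiff_right_self])).trans hU)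
    rw [convexHull_eq_union] at hpU
    simp only [Set.mem_iUnion] at hpU
    obtain ⟨S, hSPU, hSai, hpS⟩ := hpU
    have hSU : ∀ s ∈ 𝒢, Disjoint S s := fun s hs =>
      disjoint_left.2 fun x hxS hxs => (mem_sdiff.1 (hSPU hxS)).2 (mem_biUnion.2 ⟨s, hs, hxs⟩)
    have hS𝒢 : S ∉ 𝒢 := fun hS => by
      rw [(disjoint_self_iff_empty _).1 (hSU S hS), coe_empty, convexHull_empty] at hpS
      exact hpS
    refine ⟨insert S 𝒢, by rw [card_insert_of_notMem hS𝒢, h𝒢card], ?_, ?_⟩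
    · rintro s hs
      obtain rfl | hs := mem_insert.1 hs
      · exact ⟨fun x hx => (mem_sdiff.1 (hSPU hx)).1, hSai.card_le_finrank_add_one, hpS⟩
      · exact h𝒢 s hs
    · rw [coe_insert]
      exact hdisj.insert fun s hs _ => hSU s hs

end VectorSpace

section InnerProductSpace

variable {E : Type*} [NormedAddCommGroup E] [InnerProductSpace ℝ E]

theorem inner_le_inner_of_infDist_eq_dist {K : Set E} (hK : Convex ℝ K) {p q : E} (hq : q ∈ K)
    (hpq : infDist p K = dist p q) {w : E} (hw : w ∈ K) : ⟪p - q, w⟫ ≤ ⟪p - q, q⟫ := by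
  have hmin : ‖p - q‖ = ⨅ x : K, ‖p - x‖ := by
    simpa only [infDist_eq_iInf, dist_eq_norm] using hpq.symm
  have := (norm_eq_iInf_iff_real_inner_le_zero hK hq).1 hmin w hw
  rwa [inner_sub_right, sub_nonpos] at this

variable [FiniteDimensional ℝ E]

theorem exists_rainbow_mem_convexHull {ι : Type*} [Fintype ι]
    (hι : finrank ℝ E < Fintype.card ι) (C : ι → Finset E) {p : E}
    (hC : ∀ i, p ∈ convexHull ℝ (C i : Set E)) :
    ∃ v : ι → E, (∀ i, v i ∈ C i) ∧ p ∈ convexHull ℝ (Set.range v) := by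
  have : Nonempty ι := Fintype.card_pos_iff.1 (by omega)
  have : Nonempty (∀ i, C i) := ⟨fun i => ⟨_, (convexHull_nonempty_iff.1 ⟨p, hC i⟩).some_mem⟩⟩
  let hull (g : ∀ i, C i) : Set E := convexHull ℝ (Set.range fun i => (g i : E))
  obtain ⟨g, -, hg⟩ := exists_min_image univ (fun g => infDist p (hull g)) univ_nonempty
  by_contra! hp
  obtain ⟨q, hq, hpq⟩ :=
    ((Set.finite_range fun i => (g i : E)).isCompact_convexHull (𝕜 := ℝ)).exists_infDist_eq_dist
      ((Set.range_nonempty _).mono (subset_convexHull ℝ _)) p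
  set u := p - q
  have hu : u ≠ 0 := sub_ne_zero.2 fun h => hp _ (fun i => (g i).2) (h ▸ hq)
  have hl : innerₗ E u ≠ 0 := fun h => hu (inner_self_eq_zero.1 (LinearMap.congr_fun h u))
  obtain ⟨i₀, hqi₀⟩ := exists_mem_convexHull_image_compl hι (fun i => (g i : E)) hl hq fun i =>
    inner_le_inner_of_infDist_eq_dist (convex_convexHull ℝ _) hq hpq
      (subset_convexHull ℝ _ (Set.mem_range_self i))
  obtain ⟨y, hy, hqy⟩ : ∃ y ∈ C i₀, ⟪u, q⟫ < ⟪u, y⟫ := by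
    by_contra! h
    have hup : ⟪u, p⟫ ≤ ⟪u, q⟫ :=
      convexHull_min h (convex_halfSpace_le (innerₗ E u).isLinear _) (hC i₀)
    have := real_inner_self_pos.2 hu
    rw [inner_sub_right] at this
    linarith
  let g' := Function.update g i₀ ⟨y, hy⟩
  have hq' : q ∈ hull g' := convexHull_mono (by
    rintro _ ⟨i, hi, rfl⟩
    exact ⟨i, by simp [g', Function.update_of_ne hi]⟩) hqi₀
  have hy' : y ∈ hull g' := subset_convexHull ℝ _ ⟨i₀, by simp [g']⟩
  have hpq' : infDist p (hull g') = dist p q :=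
    le_antisymm (infDist_le_dist_of_mem hq') (hpq ▸ hg g' (mem_univ _))
  have := inner_le_inner_of_infDist_eq_dist (convex_convexHull ℝ _) hq' hpq' hy'
  linarith

theorem choose_card_le_card_filter_mem_convexHull {P : Finset E} {p : E}
    {𝒢 : Finset (Finset E)} (h𝒢 : ∀ s ∈ 𝒢, s ⊆ P ∧ p ∈ convexHull ℝ (s : Set E))
    (hdisj : (𝒢 : Set (Finset E)).PairwiseDisjoint id) :
    (#𝒢).choose (finrank ℝ E + 1) ≤
      #((P.powersetCard (finrank ℝ E + 1)).filter
        fun S : Finset E => p ∈ convexHull ℝ (S : Set E)) := by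
  rw [← card_powersetCard]
  refine card_le_card_of_surjOn (fun S => 𝒢.filter fun s => ¬Disjoint s S) fun σ hσ => ?_
  obtain ⟨hσ𝒢, hσcard⟩ := mem_powersetCard.1 hσ
  obtain ⟨v, hv, hpv⟩ := exists_rainbow_mem_convexHull (ι := σ) (by simp [hσcard]) (fun s => s.1)
    fun s => (h𝒢 s (hσ𝒢 s.2)).2
  have hcolor : ∀ (t : σ), ∀ s ∈ 𝒢, v t ∈ s → s = t := fun t s hs hts =>
    hdisj.elim_finset hs (hσ𝒢 t.2) _ hts (hv t)
  have hvinj : Function.Injective v := fun s t hst =>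
    Subtype.ext (hcolor t s (hσ𝒢 s.2) (hst ▸ hv s))
  refine ⟨univ.image v, mem_filter.2 ⟨mem_powersetCard.2 ⟨?_, ?_⟩, by simpa using hpv⟩, ?_⟩
  · exact image_subset_iff.2 fun s _ => (h𝒢 s (hσ𝒢 s.2)).1 (hv s)
  · rw [card_image_of_injective _ hvinj, card_univ, Fintype.card_coe, hσcard]
  · ext s
    simp only [mem_filter, not_disjoint_iff, Finset.mem_image, mem_univ, true_and]
    constructor
    · rintro ⟨hs, _, hxs, t, -, rfl⟩
      exact hcolor t s hs hxs ▸ t.2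
    · exact fun hs => ⟨hσ𝒢 hs, _, hv ⟨s, hs⟩, ⟨s, hs⟩, rfl⟩

end InnerProductSpace

theorem Nat.pow_succ_le_descFactorial_add (r k : ℕ) :
    r ^ (k + 1) ≤ r.descFactorial (k + 1) + (k + 1) ^ 2 * r ^ k := by
  induction k with
  | zero => simp
  | succ k ih =>
    rw [Nat.descFactorial_succ]
    set D := r.descFactorial (k + 1)
    have hD : (k + 1) * D ≤ (k + 1) * r ^ (k + 1) :=
      Nat.mul_le_mul_left _ (Nat.descFactorial_le_pow r (k + 1))
    have hr : r ≤ r - (k + 1) + (k + 1) := by omega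
    calc r ^ (k + 1 + 1) = r * r ^ (k + 1) := by ring
      _ ≤ r * (D + (k + 1) ^ 2 * r ^ k) := by gcongr
      _ = r * D + (k + 1) ^ 2 * r ^ (k + 1) := by ring
      _ ≤ (r - (k + 1) + (k + 1)) * D + (k + 1) ^ 2 * r ^ (k + 1) := by gcongr
      _ ≤ (r - (k + 1)) * D + (k + 1 + 1) ^ 2 * r ^ (k + 1) := by
          nlinarith [Nat.zero_le ((k + 2) * r ^ (k + 1))]

theorem sub_le_choose_of_le_sq_mul {d n r : ℕ} (hnr : n ≤ (d + 1) ^ 2 * r) (hrn : r ≤ n) :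
    (((d + 1 : ℝ) ^ 2) ^ (d + 1))⁻¹ * n.choose (d + 1) - (d + 1) ^ 2 * (n : ℝ) ^ d ≤
      r.choose (d + 1) := by
  set K : ℝ := ((d + 1 : ℝ) ^ 2) ^ (d + 1)
  have hF : (1 : ℝ) ≤ (d + 1).factorial := by exact_mod_cast (d + 1).factorial_pos
  have hdesc (m : ℕ) : (m.descFactorial (d + 1) : ℝ) = (d + 1).factorial * m.choose (d + 1) := by
    exact_mod_cast Nat.descFactorial_eq_factorial_mul_choose m (d + 1)
  set F : ℝ := ((d + 1).factorial : ℝ)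
  have key : K⁻¹ * (F * n.choose (d + 1)) ≤ F * r.choose (d + 1) + (d + 1) ^ 2 * (n : ℝ) ^ d := by
    rw [← hdesc, ← hdesc]
    calc K⁻¹ * (n.descFactorial (d + 1) : ℝ) ≤ K⁻¹ * (n : ℝ) ^ (d + 1) := by
          gcongr; exact_mod_cast Nat.descFactorial_le_pow n (d + 1)
      _ ≤ (r : ℝ) ^ (d + 1) := by
          rw [inv_mul_le_iff₀ (by positivity), ← mul_pow]
          gcongr
          exact_mod_cast hnr
      _ ≤ r.descFactorial (d + 1) + (d + 1) ^ 2 * (r : ℝ) ^ d := by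
          exact_mod_cast Nat.pow_succ_le_descFactorial_add r d
      _ ≤ r.descFactorial (d + 1) + (d + 1) ^ 2 * (n : ℝ) ^ d := by
          gcongr
  have hCn : (d + 1) ^ 2 * (n : ℝ) ^ d ≤ F * ((d + 1) ^ 2 * (n : ℝ) ^ d) :=
    le_mul_of_one_le_left (by positivity) hF
  refine le_of_mul_le_mul_left ?_ (by positivity : (0 : ℝ) < F)
  linarith

/-- In `first_selection` the simplices are counted in `Finset (Set α)`: the coercion
`Finset (Finset α) → Finset (Set α)` inserted there is the image under the `Finset` monad. -/
theorem Finset.card_filter_coe_powersetCard {α : Type*} (P : Finset α) (m : ℕ)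
    (q : Set α → Prop) :
    #((P.powersetCard m).filter fun S => q (S : Set α)) =
      #((P.powersetCard m).filter fun S : Finset α => q S) := by
  simp only [pure_def, bind_def, sup_singleton_apply, filter_image]
  exact card_image_of_injective _ coe_injective

theorem first_selection_general (d : ℕ) :
    ∃ k C : ℝ, 0 < k ∧ 0 ≤ C ∧
      ∀ n : ℕ, 0 < n →
        ∀ P : Finset (EuclideanSpace ℝ (Fin d)), P.card = n →
          (∀ S : Finset (EuclideanSpace ℝ (Fin d)), S ⊆ P → S.card ≤ d + 1 →
            AffineIndependent ℝ
              (fun x : (S : Set (EuclideanSpace ℝ (Fin d))) =>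
                (x : EuclideanSpace ℝ (Fin d)))) →
          ∃ p : EuclideanSpace ℝ (Fin d),
            k * (n.choose (d + 1) : ℝ) - C * (n : ℝ) ^ d ≤
              (((P.powersetCard (d + 1)).filter
                (fun S => p ∈ convexHull ℝ (S : Set (EuclideanSpace ℝ (Fin d))))).card : ℝ) := by
  refine ⟨(((d + 1 : ℝ) ^ 2) ^ (d + 1))⁻¹, (d + 1 : ℝ) ^ 2, by positivity, by positivity, ?_⟩
  intro n hn P hP _
  have hE : finrank ℝ (EuclideanSpace ℝ (Fin d)) = d := finrank_euclideanSpace_fin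
  set a := (n - 1) / (d + 1) ^ 2
  have ha : (d + 1) ^ 2 * a < n := by
    have : (d + 1) ^ 2 * a ≤ n - 1 := Nat.mul_div_le (n - 1) ((d + 1) ^ 2)
    omega
  have hna : n ≤ (d + 1) ^ 2 * (a + 1) := by
    have : n - 1 < (d + 1) ^ 2 * (a + 1) := Nat.lt_mul_div_succ (n - 1) (by positivity)
    omega
  have han : a + 1 ≤ n := by
    have : a ≤ n - 1 := Nat.div_le_self (n - 1) ((d + 1) ^ 2)
    omega
  obtain ⟨p, hp⟩ := exists_forall_mem_convexHull_of_card_sdiff_le (𝕜 := ℝ) P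
    (a := (d + 1) * a) (by rw [hE, hP, ← mul_assoc, ← sq]; exact ha)
  obtain ⟨𝒢, h𝒢card, h𝒢, hdisj⟩ := exists_pairwiseDisjoint_mem_convexHull hp (r := a + 1)
    (by rw [hE, mul_add, mul_one])
  have hcount := choose_card_le_card_filter_mem_convexHull
    (fun s hs => ⟨(h𝒢 s hs).1, (h𝒢 s hs).2.2⟩) hdisj
  rw [hE, h𝒢card] at hcount
  refine ⟨p, (sub_le_choose_of_le_sq_mul hna han).trans ?_⟩
  rw [card_filter_coe_powersetCard]
  exact_mod_cast hcount

/-- **First selection theorem (Boros–Füredi, Bárány).** For every positive integer `d`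
there exist constants `k > 0` and `C ≥ 0` such that for every `n`-element set `P ⊆ ℝ^d`
in general position there is a point contained in at least `k * choose n (d+1) - C * n^d`
of the `d`-simplices spanned by `(d+1)`-element subsets of `P`. -/
theorem first_selection (d : ℕ) (hd : 0 < d) :
    ∃ k C : ℝ, 0 < k ∧ 0 ≤ C ∧
      ∀ n : ℕ, 0 < n →
        ∀ P : Finset (EuclideanSpace ℝ (Fin d)), P.card = n →
          (∀ S : Finset (EuclideanSpace ℝ (Fin d)), S ⊆ P → S.card ≤ d + 1 →
            AffineIndependent ℝ
              (fun x : (S : Set (EuclideanSpace ℝ (Fin d))) =>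
                (x : EuclideanSpace ℝ (Fin d)))) →
          ∃ p : EuclideanSpace ℝ (Fin d),
            k * (n.choose (d + 1) : ℝ) - C * (n : ℝ) ^ d ≤
              (((P.powersetCard (d + 1)).filter
                (fun S => p ∈ convexHull ℝ (S : Set (EuclideanSpace ℝ (Fin d))))).card : ℝ) :=
  first_selection_general d
end

section
/- Let p be a point in ℝ^d, let H = (H_1, ..., H_{d+1}) be an arrangement of d+1 hyperplanes in general position in ℝ^d, and let Y_1, ..., Y_{d+1} be finite nonempty subsets of ℝ^d such that for every i ∈ [d+1] the hyperplane H_i strictly separates p from the union Ŷ_i = ⋃_{j ≠ i} Y_j. Then either p ∈ Δ(H) and Y_i is contained in the interior of the corner region C_i(H) for every i ∈ [d+1], or p ∉ Δ(H) and there is a hyperplane strictly separating p from Y_1 ∪ ... ∪ Y_{d+1}. -/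
/-!
The vertices `h i` are affinely independent: pairing `∑ w_i • h_i` (with `∑ w_i = 0`) with `u k`
leaves `w_k (⟪h k, u k⟫ - c k)`, and `⟪h k, u k⟫ ≠ c k` since the hyperplanes have no common
point. So they form an affine basis of `ℝ^d` whose barycentric coordinates `β_k` satisfy
`⟪x, u k⟫ - c k = β_k(x) (⟪h k, u k⟫ - c k)`. Strict separation of `p` from `Y i` by `H k` thus
says that `β_k(p)` and `β_k(y)` have opposite signs for `y ∈ Y i`, `k ≠ i`. If all `β_k(p) ≥ 0`,
then `p ∈ Δ(H)` and every `y ∈ Y i` has `β_k(y) < 0` for `k ≠ i`. Otherwise the affine function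
`∑_{k ∈ S} β_k`, with `S = {k | β_k(p) < 0}`, is negative at `p` and positive on every `Y i`,
since the coordinates of `y` sum to `1`.
-/

open scoped RealInnerProductSpace

/-- The closed half-space bounded by the hyperplane `{x | ⟪x, u j⟫ = c j}` that does not
contain the point `h j` (the vertex of the arrangement opposite to the hyperplane). -/
def halfspacePlus {d : ℕ} (u : Fin (d + 1) → EuclideanSpace ℝ (Fin d))
    (c : Fin (d + 1) → ℝ) (h : Fin (d + 1) → EuclideanSpace ℝ (Fin d)) (j : Fin (d + 1)) :
    Set (EuclideanSpace ℝ (Fin d)) :=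
  {x | (⟪x, u j⟫ - c j) * (⟪h j, u j⟫ - c j) ≤ 0}

/-- The corner region `C i` of an arrangement of `d + 1` hyperplanes in general position:
the intersection of the half-spaces `H j ⁺` over `j ≠ i`. -/
def cornerRegion {d : ℕ} (u : Fin (d + 1) → EuclideanSpace ℝ (Fin d))
    (c : Fin (d + 1) → ℝ) (h : Fin (d + 1) → EuclideanSpace ℝ (Fin d)) (i : Fin (d + 1)) :
    Set (EuclideanSpace ℝ (Fin d)) :=
  ⋂ (j) (_ : j ≠ i), halfspacePlus u c h j

open Finset

theorem sum_filter_neg_pos_of_mul_neg {ι : Type*} [Fintype ι] {a b : ι → ℝ}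
    (hb : ∑ k, b k = 1) {i : ι} (hab : ∀ k, k ≠ i → a k * b k < 0) (ha : ∃ k, a k < 0) :
    0 < ∑ k ∈ univ.filter (fun k => a k < 0), b k := by
  by_cases hi : a i < 0
  · have hrest : ∑ k ∈ univ.filter (fun k => ¬a k < 0), b k ≤ 0 :=
      sum_nonpos fun k hk => by
        have hak : 0 ≤ a k := not_lt.1 (mem_filter.1 hk).2
        have hki : k ≠ i := by rintro rfl; exact (mem_filter.1 hk).2 hi
        exact (neg_of_mul_neg_right (hab k hki) hak).le
    have := sum_filter_add_sum_filter_not univ (fun k => a k < 0) b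
    linarith
  · obtain ⟨k, hk⟩ := ha
    refine sum_pos (fun j hj => ?_) ⟨k, mem_filter.2 ⟨mem_univ k, hk⟩⟩
    have hj : a j < 0 := (mem_filter.1 hj).2
    exact pos_of_mul_neg_right (hab j (by rintro rfl; exact hi hj)) hj.le

section Arrangement

variable {ι E : Type*} [NormedAddCommGroup E] [InnerProductSpace ℝ E]
  {u : ι → E} {c : ι → ℝ} {h : ι → E}

theorem inner_vertex_sub_ne_zero (hh : ∀ i j, j ≠ i → ⟪h i, u j⟫ = c j)
    (hempty : (⋂ i, {x : E | ⟪x, u i⟫ = c i}) = ∅) (i : ι) : ⟪h i, u i⟫ - c i ≠ 0 := by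
  intro hi
  have hmem : h i ∈ ⋂ j, {x : E | ⟪x, u j⟫ = c j} := Set.mem_iInter.2 fun j => by
    rcases eq_or_ne j i with rfl | hji
    · exact sub_eq_zero.1 hi
    · exact hh i j hji
  rw [hempty] at hmem
  exact hmem

theorem inner_sum_smul_vertex_sub (hh : ∀ i j, j ≠ i → ⟪h i, u j⟫ = c j) {s : Finset ι}
    (w : ι → ℝ) {k : ι} (hk : k ∈ s) :
    ⟪∑ i ∈ s, w i • h i, u k⟫ - (∑ i ∈ s, w i) * c k = w k * (⟪h k, u k⟫ - c k) := by
  simp_rw [sum_inner, real_inner_smul_left, sum_mul, ← sum_sub_distrib, ← mul_sub]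
  exact sum_eq_single_of_mem k hk fun i _ hik => by rw [hh i k hik.symm, sub_self, mul_zero]

theorem affineIndependent_of_inner_vertex (hh : ∀ i j, j ≠ i → ⟪h i, u j⟫ = c j)
    (hempty : (⋂ i, {x : E | ⟪x, u i⟫ = c i}) = ∅) : AffineIndependent ℝ h := by
  rw [affineIndependent_iff]
  intro s w hw hwh k hk
  have hwk := inner_sum_smul_vertex_sub hh w hk
  rw [hw, hwh, inner_zero_left, zero_mul, sub_zero] at hwk
  exact (mul_eq_zero.1 hwk.symm).resolve_right (inner_vertex_sub_ne_zero hh hempty k)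

def vertexBasis [Fintype ι] [FiniteDimensional ℝ E] (hh : ∀ i j, j ≠ i → ⟪h i, u j⟫ = c j)
    (hempty : (⋂ i, {x : E | ⟪x, u i⟫ = c i}) = ∅)
    (hcard : Fintype.card ι = Module.finrank ℝ E + 1) : AffineBasis ι ℝ E :=
  ⟨h, affineIndependent_of_inner_vertex hh hempty,
    (affineIndependent_of_inner_vertex hh hempty).affineSpan_eq_top_iff_card_eq_finrank_add_one.2
      hcard⟩

namespace AffineBasis

variable [Fintype ι] (b : AffineBasis ι ℝ E)

theorem inner_sub_eq_coord_mul (hb : ∀ i j, j ≠ i → ⟪b i, u j⟫ = c j) (x : E) (k : ι) :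
    ⟪x, u k⟫ - c k = b.coord k x * (⟪b k, u k⟫ - c k) := by
  have := inner_sum_smul_vertex_sub hb (b.coord · x) (mem_univ k)
  rwa [b.linear_combination_coord_eq_self, b.sum_coord_apply_eq_one, one_mul] at this

theorem coord_mul_coord_neg (hb : ∀ i j, j ≠ i → ⟪b i, u j⟫ = c j) {x y : E} {k : ι}
    (hxy : (⟪x, u k⟫ - c k) * (⟪y, u k⟫ - c k) < 0) : b.coord k x * b.coord k y < 0 := by
  rw [b.inner_sub_eq_coord_mul hb x, b.inner_sub_eq_coord_mul hb y] at hxy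
  nlinarith [sq_nonneg (⟪b k, u k⟫ - c k)]

theorem exists_inner_sub_eq_sum_coord (hb : ∀ i j, j ≠ i → ⟪b i, u j⟫ = c j)
    (ht : ∀ k, ⟪b k, u k⟫ - c k ≠ 0) (s : Finset ι) :
    ∃ (w : E) (r : ℝ), ∀ x, ⟪x, w⟫ - r = ∑ k ∈ s, b.coord k x := by
  refine ⟨∑ k ∈ s, (⟪b k, u k⟫ - c k)⁻¹ • u k, ∑ k ∈ s, (⟪b k, u k⟫ - c k)⁻¹ * c k,
    fun x => ?_⟩
  simp_rw [inner_sum, real_inner_smul_right, ← sum_sub_distrib, ← mul_sub,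
    b.inner_sub_eq_coord_mul hb x]
  exact sum_congr rfl fun k _ => by rw [mul_comm (b.coord k x), inv_mul_cancel_left₀ (ht k)]

end AffineBasis

end Arrangement

theorem AffineBasis.subset_interior_cornerRegion {d : ℕ}
    {u : Fin (d + 1) → EuclideanSpace ℝ (Fin d)} {c : Fin (d + 1) → ℝ}
    (b : AffineBasis (Fin (d + 1)) ℝ (EuclideanSpace ℝ (Fin d)))
    (hb : ∀ i j, j ≠ i → ⟪b i, u j⟫ = c j) (i : Fin (d + 1)) :
    {x | ∀ j, j ≠ i → b.coord j x < 0} ⊆ interior (cornerRegion u c b i) := by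
  refine interior_maximal (fun x hx => ?_) ?_
  · simp only [cornerRegion, halfspacePlus, Set.mem_iInter, Set.mem_ofPred_eq]
    intro j hj
    rw [b.inner_sub_eq_coord_mul hb x j, mul_assoc]
    exact mul_nonpos_of_nonpos_of_nonneg (hx j hj).le (mul_self_nonneg _)
  · simp only [Set.ofPred_forall]
    exact isOpen_iInter_of_finite fun j => isOpen_iInter_of_finite fun _ =>
      isOpen_lt (continuous_barycentric_coord b j) continuous_const

theorem separation_lemma_general {d : ℕ} (p : EuclideanSpace ℝ (Fin d))
    (u : Fin (d + 1) → EuclideanSpace ℝ (Fin d)) (c : Fin (d + 1) → ℝ)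
    (hempty : (⋂ i, {x : EuclideanSpace ℝ (Fin d) | ⟪x, u i⟫ = c i}) = ∅)
    (h : Fin (d + 1) → EuclideanSpace ℝ (Fin d))
    (hh : ∀ i j, j ≠ i → ⟪h i, u j⟫ = c j)
    (Y : Fin (d + 1) → Finset (EuclideanSpace ℝ (Fin d)))
    (hsep : ∀ i j, j ≠ i → ∀ y ∈ Y j, (⟪p, u i⟫ - c i) * (⟪y, u i⟫ - c i) < 0) :
    (p ∈ convexHull ℝ (Set.range h) ∧
      ∀ i, (Y i : Set (EuclideanSpace ℝ (Fin d))) ⊆ interior (cornerRegion u c h i)) ∨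
    (p ∉ convexHull ℝ (Set.range h) ∧
      ∃ (w : EuclideanSpace ℝ (Fin d)) (b : ℝ),
        ⟪p, w⟫ < b ∧ ∀ i, ∀ y ∈ Y i, b < ⟪y, w⟫) := by
  let β := vertexBasis hh hempty (by simp)
  have hΔ : convexHull ℝ (Set.range h) = {x | ∀ k, 0 ≤ β.coord k x} :=
    β.convexHull_eq_nonneg_coord
  have hopp : ∀ i, ∀ y ∈ Y i, ∀ k, k ≠ i → β.coord k p * β.coord k y < 0 :=
    fun i y hy k hki => β.coord_mul_coord_neg hh (hsep k i hki.symm y hy)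
  by_cases hp : ∀ k, 0 ≤ β.coord k p
  · refine .inl ⟨hΔ ▸ hp, fun i y hy => β.subset_interior_cornerRegion hh i fun k hki => ?_⟩
    exact neg_of_mul_neg_right (hopp i y hy k hki) (hp k)
  push Not at hp
  obtain ⟨w, r, hwr⟩ := β.exists_inner_sub_eq_sum_coord hh (inner_vertex_sub_ne_zero hh hempty)
    (univ.filter fun k => β.coord k p < 0)
  refine .inr ⟨fun hpΔ => ?_, w, r, ?_, fun i y hy => ?_⟩
  · obtain ⟨k₀, hk₀⟩ := hp
    exact hk₀.not_ge ((hΔ ▸ hpΔ) k₀)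
  · obtain ⟨k₀, hk₀⟩ := hp
    have hneg : ∑ k ∈ univ.filter (fun k => β.coord k p < 0), β.coord k p < 0 :=
      sum_neg (fun k hk => (mem_filter.1 hk).2) ⟨k₀, mem_filter.2 ⟨mem_univ k₀, hk₀⟩⟩
    linarith [hwr p]
  · linarith [hwr y, sum_filter_neg_pos_of_mul_neg (β.sum_coord_apply_eq_one y) (hopp i y hy) hp]

/-- **Separation lemma.** Let `p ∈ ℝ^d`, let `H = (H 0, …, H d)` be an arrangement of
`d + 1` hyperplanes in general position (with `H i = {x | ⟪x, u i⟫ = c i}`, opposite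
vertices `h i`), and let `Y 0, …, Y d` be finite nonempty sets such that `H i` strictly
separates `p` from `⋃_{j ≠ i} Y j` for every `i`. Then either `p ∈ Δ(H)` and every `Y i`
lies in the interior of the corner region `C i`, or `p ∉ Δ(H)` and some hyperplane
strictly separates `p` from `Y 0 ∪ ⋯ ∪ Y d`. -/
theorem separation_lemma {d : ℕ} (p : EuclideanSpace ℝ (Fin d))
    (u : Fin (d + 1) → EuclideanSpace ℝ (Fin d)) (c : Fin (d + 1) → ℝ)
    (hu : ∀ i, u i ≠ 0)
    (hindep : ∀ i : Fin (d + 1),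
      LinearIndependent ℝ (fun j : {j : Fin (d + 1) // j ≠ i} => u j))
    (hempty : (⋂ i, {x : EuclideanSpace ℝ (Fin d) | ⟪x, u i⟫ = c i}) = ∅)
    (h : Fin (d + 1) → EuclideanSpace ℝ (Fin d))
    (hh : ∀ i j, j ≠ i → ⟪h i, u j⟫ = c j)
    (Y : Fin (d + 1) → Finset (EuclideanSpace ℝ (Fin d)))
    (hYne : ∀ i, (Y i).Nonempty)
    (hsep : ∀ i j, j ≠ i → ∀ y ∈ Y j, (⟪p, u i⟫ - c i) * (⟪y, u i⟫ - c i) < 0) :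
    (p ∈ convexHull ℝ (Set.range h) ∧
      ∀ i, (Y i : Set (EuclideanSpace ℝ (Fin d))) ⊆ interior (cornerRegion u c h i)) ∨
    (p ∉ convexHull ℝ (Set.range h) ∧
      ∃ (w : EuclideanSpace ℝ (Fin d)) (b : ℝ),
        ⟪p, w⟫ < b ∧ ∀ i, ∀ y ∈ Y i, b < ⟪y, w⟫) :=
  separation_lemma_general p u c hempty h hh Y hsep
end

section
/- Let H = (H_1, ..., H_{d+1}) be an arrangement of d+1 hyperplanes in general position in ℝ^d, let p be a point in Δ(H), and let y_1, ..., y_{d+1} be points in ℝ^d such that y_i ∈ C_i(H) for every i ∈ [d+1]. Then p belongs to conv{y_1, ..., y_{d+1}}. -/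
open scoped RealInnerProductSpace

/-! The vertices `h i` form an affine basis whose barycentric coordinates are, up to the nonzero
factors `⟪h j, u j⟫ - c j`, the functionals `⟪x, u j⟫ - c j`. Hence `p` has nonnegative
coordinates, and `y i` has nonpositive coordinates except possibly the `i`-th one. If `p` were
not in the convex hull of the `y i`, a linear functional `f` would separate them strictly; but
expanding `f` in barycentric coordinates around a vertex `h i` where `f` is minimal gives
`f (y i) ≤ f (h i) ≤ f p`. -/

open Finset

section AffineFunctionals

variable {k V P ι : Type*} [Field k] [AddCommGroup V] [Module k V] [AddTorsor V P] [Fintype ι]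

theorem AffineMap.apply_affineCombination_univ (f : P →ᵃ[k] k) (p : ι → P) {w : ι → k}
    (hw : ∑ i, w i = 1) :
    f (univ.affineCombination k p w) = ∑ i, w i * f (p i) := by
  rw [univ.map_affineCombination p w hw, univ.affineCombination_eq_linear_combination _ _ hw]
  rfl

theorem AffineMap.apply_affineCombination_univ_of_apply_eq_zero (f : P →ᵃ[k] k) {p : ι → P}
    {j : ι} (hf : ∀ i, i ≠ j → f (p i) = 0) {w : ι → k} (hw : ∑ i, w i = 1) :
    f (univ.affineCombination k p w) = w j * f (p j) := by
  rw [f.apply_affineCombination_univ p hw,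
    sum_eq_single j (fun i _ hij => by rw [hf i hij, mul_zero]) (by simp)]

theorem affineIndependent_of_affineMap_apply_eq_zero {p : ι → P} (g : ι → P →ᵃ[k] k)
    (hg : ∀ i j, i ≠ j → g j (p i) = 0) (hg_self : ∀ j, g j (p j) ≠ 0) :
    AffineIndependent k p := by
  rw [affineIndependent_iff_eq_of_fintype_affineCombination_eq]
  intro w₁ w₂ hw₁ hw₂ hw
  funext j
  have hj := congrArg (g j) hw
  rwa [(g j).apply_affineCombination_univ_of_apply_eq_zero (hg · j) hw₁,
    (g j).apply_affineCombination_univ_of_apply_eq_zero (hg · j) hw₂,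
    mul_left_inj' (hg_self j)] at hj

namespace AffineBasis

variable (b : AffineBasis ι k P)

theorem affineMap_apply_eq_sum_coord_mul (f : P →ᵃ[k] k) (x : P) :
    f x = ∑ i, b.coord i x * f (b i) := by
  conv_lhs => rw [← b.affineCombination_coord_eq_self x]
  exact f.apply_affineCombination_univ b (b.sum_coord_apply_eq_one x)

theorem coord_mul_apply_self {g : P →ᵃ[k] k} {j : ι} (hg : ∀ i, i ≠ j → g (b i) = 0)
    (x : P) : b.coord j x * g (b j) = g x := by
  conv_rhs => rw [← b.affineCombination_coord_eq_self x]
  exact (g.apply_affineCombination_univ_of_apply_eq_zero hg (b.sum_coord_apply_eq_one x)).symm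

variable [LinearOrder k] [IsStrictOrderedRing k]

theorem coord_nonpos_of_mul_apply_nonpos {g : P →ᵃ[k] k} {j : ι}
    (hg : ∀ i, i ≠ j → g (b i) = 0) (hj : g (b j) ≠ 0) {x : P} (hx : g x * g (b j) ≤ 0) :
    b.coord j x ≤ 0 := by
  rw [← b.coord_mul_apply_self hg, mul_assoc] at hx
  exact nonpos_of_mul_nonpos_left hx (mul_self_pos.2 hj)

theorem exists_apply_le_of_coord_nonpos (f : P →ᵃ[k] k) {x : P} (hx : ∀ i, 0 ≤ b.coord i x)
    {y : ι → P} (hy : ∀ i j, j ≠ i → b.coord j (y i) ≤ 0) : ∃ i, f (y i) ≤ f x := by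
  obtain ⟨i, -, hi⟩ := univ.exists_min_image (fun j => f (b j)) (univ_nonempty_iff.2 b.nonempty)
  have increment : ∀ z, f z - f (b i) = ∑ j, b.coord j z * (f (b j) - f (b i)) := fun z => by
    simp only [mul_sub, sum_sub_distrib, ← sum_mul, b.sum_coord_apply_eq_one, one_mul,
      ← b.affineMap_apply_eq_sum_coord_mul]
  have hmin : ∀ j, 0 ≤ f (b j) - f (b i) := fun j => sub_nonneg.2 (hi j (mem_univ j))
  have hy_le : f (y i) - f (b i) ≤ 0 := by
    rw [increment]
    refine sum_nonpos fun j _ => ?_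
    rcases eq_or_ne j i with rfl | hji
    · simp
    · exact mul_nonpos_of_nonpos_of_nonneg (hy i j hji) (hmin j)
  have hx_ge : 0 ≤ f x - f (b i) := by
    rw [increment]
    exact sum_nonneg fun j _ => mul_nonneg (hx j) (hmin j)
  exact ⟨i, by linarith⟩

end AffineBasis

end AffineFunctionals

section Separation

variable {E ι : Type*} [AddCommGroup E] [Module ℝ E] [TopologicalSpace E]
  [IsTopologicalAddGroup E] [ContinuousSMul ℝ E] [LocallyConvexSpace ℝ E] [T2Space E]

theorem mem_convexHull_range_of_forall_exists_le [Finite ι] {y : ι → E} {x : E}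
    (H : ∀ f : StrongDual ℝ E, ∃ i, f (y i) ≤ f x) : x ∈ convexHull ℝ (Set.range y) := by
  by_contra hx
  obtain ⟨f, s, hfx, hfy⟩ := geometric_hahn_banach_point_closed (convex_convexHull ℝ _)
    ((Set.finite_range y).isClosed_convexHull (𝕜 := ℝ)) hx
  obtain ⟨i, hi⟩ := H f
  have := hfy (y i) (subset_convexHull ℝ _ (Set.mem_range_self i))
  linarith

theorem AffineBasis.mem_convexHull_range_of_coord_nonpos [Fintype ι] (b : AffineBasis ι ℝ E)
    {x : E} (hx : x ∈ convexHull ℝ (Set.range b)) {y : ι → E}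
    (hy : ∀ i j, j ≠ i → b.coord j (y i) ≤ 0) : x ∈ convexHull ℝ (Set.range y) :=
  mem_convexHull_range_of_forall_exists_le fun f =>
    b.exists_apply_le_of_coord_nonpos (f : E →ₗ[ℝ] ℝ).toAffineMap
      (by rwa [b.convexHull_eq_nonneg_coord] at hx) hy

end Separation

theorem corner_points_cover_simplex_general {d : ℕ}
    (u : Fin (d + 1) → EuclideanSpace ℝ (Fin d)) (c : Fin (d + 1) → ℝ)
    (hempty : (⋂ i, {x : EuclideanSpace ℝ (Fin d) | ⟪x, u i⟫ = c i}) = ∅)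
    (h : Fin (d + 1) → EuclideanSpace ℝ (Fin d))
    (hh : ∀ i j, j ≠ i → ⟪h i, u j⟫ = c j)
    (p : EuclideanSpace ℝ (Fin d)) (hp : p ∈ convexHull ℝ (Set.range h))
    (y : Fin (d + 1) → EuclideanSpace ℝ (Fin d))
    (hy : ∀ i, y i ∈ cornerRegion u c h i) :
    p ∈ convexHull ℝ (Set.range y) := by
  let g : Fin (d + 1) → EuclideanSpace ℝ (Fin d) →ᵃ[ℝ] ℝ := fun j =>
    (innerₛₗ ℝ (u j)).toAffineMap - AffineMap.const ℝ _ (c j)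
  have hg : ∀ j x, g j x = ⟪x, u j⟫ - c j := fun j x => by simp [g, real_inner_comm]
  have hg_vertex : ∀ i j, i ≠ j → g j (h i) = 0 := fun i j hij => by
    rw [hg, hh i j hij.symm, sub_self]
  have hg_self : ∀ j, g j (h j) ≠ 0 := by
    intro j hj
    have : h j ∈ ⋂ i, {x : EuclideanSpace ℝ (Fin d) | ⟪x, u i⟫ = c i} :=
      Set.mem_iInter.2 fun i => by
        rcases eq_or_ne j i with rfl | hji
        · exact sub_eq_zero.1 ((hg j _).symm.trans hj)
        · exact hh j i hji.symm
    simp [hempty] at this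
  have hind := affineIndependent_of_affineMap_apply_eq_zero g hg_vertex hg_self
  let b : AffineBasis (Fin (d + 1)) ℝ (EuclideanSpace ℝ (Fin d)) :=
    ⟨h, hind, by rw [hind.affineSpan_eq_top_iff_card_eq_finrank_add_one]; simp⟩
  refine b.mem_convexHull_range_of_coord_nonpos hp fun i j hji => ?_
  refine b.coord_nonpos_of_mul_apply_nonpos (hg_vertex · j) (hg_self j) ?_
  show g j (y i) * g j (h j) ≤ 0
  simpa only [hg] using (Set.mem_iInter₂.1 (hy i) j hji : y i ∈ halfspacePlus u c h j).out

/-- **Points in the corner regions span the central simplex.** If `H` is an arrangement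
of `d + 1` hyperplanes in general position in `ℝ^d`, `p ∈ Δ(H)`, and `y i ∈ C i(H)` for
every `i`, then `p ∈ conv {y 0, …, y d}`. -/
theorem corner_points_cover_simplex {d : ℕ}
    (u : Fin (d + 1) → EuclideanSpace ℝ (Fin d)) (c : Fin (d + 1) → ℝ)
    (hu : ∀ i, u i ≠ 0)
    (hindep : ∀ i : Fin (d + 1),
      LinearIndependent ℝ (fun j : {j : Fin (d + 1) // j ≠ i} => u j))
    (hempty : (⋂ i, {x : EuclideanSpace ℝ (Fin d) | ⟪x, u i⟫ = c i}) = ∅)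
    (h : Fin (d + 1) → EuclideanSpace ℝ (Fin d))
    (hh : ∀ i j, j ≠ i → ⟪h i, u j⟫ = c j)
    (p : EuclideanSpace ℝ (Fin d)) (hp : p ∈ convexHull ℝ (Set.range h))
    (y : Fin (d + 1) → EuclideanSpace ℝ (Fin d))
    (hy : ∀ i, y i ∈ cornerRegion u c h i) :
    p ∈ convexHull ℝ (Set.range y) :=
  corner_points_cover_simplex_general u c hempty h hh p hp y hy
end

section
/- For every positive integer k, every β > 0 and every ε with 0 < ε < 1/2, there exists n_0 such that for every n ≥ n_0 the following holds: if X_1, ..., X_k are pairwise disjoint n-element sets and E ⊆ X_1 × ... × X_k is a set of edges with |E| ≥ β·n^k, then there exist subsets S_i ⊆ X_i of equal size s = |S_1| = ... = |S_k| with s ≥ β^{1/ε^k}·n such that (1) |E ∩ (S_1 × ... × S_k)| ≥ β·s^k, and (2) for all subsets Y_i ⊆ S_i with |Y_i| ≥ ε·s for every i ∈ [k], the set E ∩ (Y_1 × ... × Y_k) is nonempty. -/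
open scoped Classical

/-!
Put `λ = ε ^ k` and, for a box `S = S₀ × ⋯ × S_{k-1}` with all sides of size `t`, let `d(S)` be
the edge density of `E` on `S`. Take `t` minimal among boxes `S ⊆ X` with `d(S) t^λ ≥ β n^λ`
(the box `X` itself qualifies). As `d(S) ≤ 1` this forces `t ≥ β^{1/λ} n`, and as `t ≤ n` it
forces `d(S) ≥ β`. If some `Y ⊆ S` with sides `≥ ε t` carried no edge, the edges in `S` would be
split among the `k` stair boxes `Y₀ × ⋯ × Y_{j-1} × (S_j \ Y_j) × S_{j+1} × ⋯`. A weighted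
pigeonhole over them, whose weights are controlled by
`q^{1-λ} + (1-q)^{1-λ} ≤ 1 + q^{k-λ}` for `q ≤ 1/2` and `λ ≤ q^k` (binary entropy is `< 1`),
followed by averaging the stair box down to a cube, produces a strictly smaller cube with
`d t^λ ≥ β n^λ`, contradicting minimality.
-/

open Finset Real Function

lemma rpow_le_one_add_mul_log_mul_rpow {x : ℝ} (hx : 0 < x) (r : ℝ) :
    x ^ r ≤ 1 + r * log x * x ^ r := by
  have h := mul_le_mul_of_nonneg_left (add_one_le_exp (-(log x * r))) (exp_pos (log x * r)).le
  rw [mul_add, ← exp_add, add_neg_cancel, exp_zero] at h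
  rw [rpow_def_of_pos hx]
  linarith

lemma rpow_one_sub_add_one_sub_rpow_one_sub_le {q r : ℝ} (k : ℕ) (hq0 : 0 < q) (hq : q ≤ 1 / 2)
    (hr0 : 0 ≤ r) (hr : r ≤ q ^ k) :
    q ^ (1 - r) + (1 - q) ^ (1 - r) ≤ 1 + q ^ ((k : ℝ) - r) := by
  have hq1 : 0 < 1 - q := by linarith
  set u := q⁻¹ ^ r
  set v := (1 - q)⁻¹ ^ r
  have hu : u ≤ 1 + r * log q⁻¹ * u := rpow_le_one_add_mul_log_mul_rpow (inv_pos.2 hq0) r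
  have hv : v ≤ 1 + r * log (1 - q)⁻¹ * v := rpow_le_one_add_mul_log_mul_rpow (inv_pos.2 hq1) r
  have hvu : v ≤ u := rpow_le_rpow (by positivity) (inv_anti₀ hq0 (by linarith)) hr0
  have hM : 0 ≤ log (1 - q)⁻¹ := log_nonneg ((one_le_inv₀ hq1).2 (by linarith))
  -- the left side is the binary entropy of `q`, at most `log 2`
  have hH : q * log q⁻¹ + (1 - q) * log (1 - q)⁻¹ ≤ 1 :=
    binEntropy_le_log_two.trans (log_two_lt_d9.le.trans (by norm_num))
  have hsplit : ∀ {a : ℝ}, 0 < a → ∀ t : ℝ, a ^ (t - r) = a ^ t * a⁻¹ ^ r := fun ha t => by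
    rw [rpow_sub ha, inv_rpow ha.le, div_eq_mul_inv]
  rw [hsplit hq0, hsplit hq1, hsplit hq0, rpow_one, rpow_one, rpow_natCast]
  calc q * u + (1 - q) * v
      ≤ q * (1 + r * log q⁻¹ * u) + (1 - q) * (1 + r * log (1 - q)⁻¹ * u) := by
        gcongr
        exact hv.trans (by gcongr)
    _ = 1 + r * u * (q * log q⁻¹ + (1 - q) * log (1 - q)⁻¹) := by ring
    _ ≤ 1 + r * u := by
        have : 0 ≤ r * u := mul_nonneg hr0 (by positivity)
        nlinarith
    _ ≤ 1 + q ^ k * u := by gcongr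

lemma sum_range_pow_mul_rpow_le {y s r : ℝ} {k : ℕ} (hy : 0 < y) (hys : 2 * y ≤ s) (hr0 : 0 ≤ r)
    (hr : r ≤ (y / s) ^ k) :
    ∑ j ∈ range k, y ^ j * (s - y) * s ^ (k - 1 - j) * (if j = 0 then s - y else y) ^ (-r) ≤
      s ^ k * s ^ (-r) := by
  have hs : 0 < s := by linarith
  have hsy : 0 < s - y := by linarith
  have hsplit : ∀ {a : ℝ}, 0 < a → ∀ t : ℝ, a ^ (t - r) = a ^ t * a ^ (-r) := fun ha t => by
    rw [rpow_sub ha, rpow_neg ha.le, div_eq_mul_inv]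
  have key := rpow_one_sub_add_one_sub_rpow_one_sub_le k (div_pos hy hs)
    ((div_le_iff₀ hs).2 (by linarith)) hr0 hr
  rw [one_sub_div hs.ne', hsplit (div_pos hy hs), hsplit (div_pos hsy hs), hsplit (div_pos hy hs),
    rpow_one, rpow_one, rpow_natCast, div_rpow hy.le hs.le, div_rpow hsy.le hs.le] at key
  rcases k with _ | k
  · simp only [range_zero, sum_empty]; positivity
  have hgeom : (∑ j ∈ range k, y ^ j * s ^ (k - 1 - j)) * (s - y) = s ^ k - y ^ k := by
    linarith [geom_sum₂_mul y s k]
  rw [sum_range_succ']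
  simp only [Nat.add_one_ne_zero, if_false, if_true, pow_zero, one_mul, Nat.add_sub_cancel,
    Nat.sub_zero]
  have htail : ∑ j ∈ range k, y ^ (j + 1) * (s - y) * s ^ (k - (j + 1)) * y ^ (-r) =
      y * y ^ (-r) * (s ^ k - y ^ k) := by
    rw [← hgeom, sum_mul, mul_sum]
    refine sum_congr rfl fun j hj => ?_
    rw [show k - (j + 1) = k - 1 - j by omega]
    ring
  rw [htail]
  rw [div_pow] at key
  field_simp at key
  refine le_of_mul_le_mul_left ?_ hs
  simp only [pow_succ] at key ⊢
  linarith

lemma rpow_one_div_mul_le_of_mul_rpow_le {β r x y : ℝ} (hβ : 0 < β) (hr : 0 < r) (hx : 0 ≤ x)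
    (hy : 0 ≤ y) (h : β * x ^ r ≤ y ^ r) : β ^ (1 / r) * x ≤ y := by
  rwa [← rpow_le_rpow_iff (by positivity) hy hr, mul_rpow (by positivity) hx, ← rpow_mul hβ.le,
    one_div_mul_cancel hr.ne', rpow_one]

noncomputable section

variable {ι V : Type*}

def boxEdges [Fintype ι] (E : Finset (ι → V)) (T : ι → Finset V) : Finset (ι → V) :=
  E.filter fun e => ∀ i, e i ∈ T i

def boxDensity [Fintype ι] (E : Finset (ι → V)) (T : ι → Finset V) : ℝ :=
  #(boxEdges E T) / ∏ i, (#(T i) : ℝ)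

lemma boxEdges_eq_self [Fintype ι] {E : Finset (ι → V)} {T : ι → Finset V}
    (hE : ∀ e ∈ E, ∀ i, e i ∈ T i) : boxEdges E T = E :=
  filter_true_of_mem hE

lemma boxDensity_nonneg [Fintype ι] (E : Finset (ι → V)) (T : ι → Finset V) :
    0 ≤ boxDensity E T :=
  div_nonneg (Nat.cast_nonneg _) (prod_nonneg fun _ _ => Nat.cast_nonneg _)

lemma boxDensity_le_one [Fintype ι] (E : Finset (ι → V)) (T : ι → Finset V) :
    boxDensity E T ≤ 1 := by
  refine div_le_one_of_le₀ ?_ (prod_nonneg fun _ _ => Nat.cast_nonneg _)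
  rw [← Nat.cast_prod, ← Fintype.card_piFinset, Nat.cast_le]
  exact card_le_card fun e he => Fintype.mem_piFinset.2 (mem_filter.1 he).2

lemma boxDensity_mul_prod_card [Fintype ι] (E : Finset (ι → V)) {T : ι → Finset V}
    (hT : ∏ i, (#(T i) : ℝ) ≠ 0) : boxDensity E T * ∏ i, (#(T i) : ℝ) = #(boxEdges E T) :=
  div_mul_cancel₀ _ hT

lemma boxEdges_update_erase [Fintype ι] (E : Finset (ι → V)) (T : ι → Finset V) (i₀ : ι)
    (x : V) :
    boxEdges E (update T i₀ ((T i₀).erase x)) = (boxEdges E T).filter fun e => x ≠ e i₀ := by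
  ext e
  have := forall_update_iff T (a := i₀) (b := (T i₀).erase x) (fun i A => e i ∈ A)
  simp only [boxEdges, mem_filter, mem_erase] at this ⊢
  rw [this]
  grind

lemma sum_card_boxEdges_update_erase [Fintype ι] (E : Finset (ι → V)) (T : ι → Finset V)
    (i₀ : ι) :
    ∑ x ∈ T i₀, #(boxEdges E (update T i₀ ((T i₀).erase x))) =
      (#(T i₀) - 1) * #(boxEdges E T) := by
  simp_rw [boxEdges_update_erase]
  have := sum_card_bipartiteAbove_eq_sum_card_bipartiteBelow (fun x (e : ι → V) => x ≠ e i₀)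
    (s := T i₀) (t := boxEdges E T)
  simp only [bipartiteAbove, bipartiteBelow] at this
  rw [this, sum_congr rfl fun e he => ?_, sum_const, smul_eq_mul, mul_comm]
  rw [filter_ne', card_erase_of_mem]
  exact (mem_filter.1 he).2 i₀

lemma exists_boxDensity_le_update_erase [Fintype ι] (E : Finset (ι → V)) (T : ι → Finset V)
    {i₀ : ι} (h : 2 ≤ #(T i₀)) :
    ∃ x ∈ T i₀, boxDensity E T ≤ boxDensity E (update T i₀ ((T i₀).erase x)) := by
  set t := #(T i₀)
  obtain ⟨x, hx, hle⟩ : ∃ x ∈ T i₀,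
      #(boxEdges E T) * (t - 1) ≤ #(boxEdges E (update T i₀ ((T i₀).erase x))) * t := by
    refine exists_le_of_sum_le (card_pos.1 (by omega)) (le_of_eq ?_)
    rw [sum_const, smul_eq_mul, ← sum_mul, sum_card_boxEdges_update_erase]
    ring
  refine ⟨x, hx, ?_⟩
  set P := ∏ i ∈ univ \ {i₀}, (#(T i) : ℝ)
  have hvol : ∏ i, (#(T i) : ℝ) = t * P :=
    prod_eq_mul_prod_sdiff_singleton i₀ _ (absurd (mem_univ i₀))
  have hvol' : ∏ i, (#(update T i₀ ((T i₀).erase x) i) : ℝ) = (t - 1 : ℕ) * P := by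
    simp_rw [apply_update (fun _ A => (#A : ℝ)), prod_update_of_mem (mem_univ i₀),
      card_erase_of_mem hx]
    rfl
  have ht : (0 : ℝ) < (t - 1 : ℕ) := by norm_cast; omega
  rw [boxDensity, boxDensity, hvol, hvol', ← div_div, ← div_div]
  refine div_le_div_of_nonneg_right ?_ (prod_nonneg fun i _ => by positivity)
  rw [div_le_div_iff₀ (by positivity) ht]
  exact_mod_cast hle

lemma exists_subbox_card_eq_boxDensity_ge [Fintype ι] (E : Finset (ι → V)) (T : ι → Finset V)
    {m : ℕ} (hm : 0 < m) (hT : ∀ i, m ≤ #(T i)) :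
    ∃ U : ι → Finset V, (∀ i, U i ⊆ T i) ∧ (∀ i, #(U i) = m) ∧
      boxDensity E T ≤ boxDensity E U := by
  by_cases hall : ∀ i, #(T i) = m
  · exact ⟨T, fun _ => subset_rfl, hall, le_rfl⟩
  obtain ⟨i₀, hi₀⟩ := not_forall.1 hall
  have hm_lt : m < #(T i₀) := (hT i₀).lt_of_ne (Ne.symm hi₀)
  obtain ⟨x, hx, hdens⟩ := exists_boxDensity_le_update_erase E T (i₀ := i₀) (by omega)
  have hsub : ∀ i, update T i₀ ((T i₀).erase x) i ⊆ T i := by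
    intro i
    rcases eq_or_ne i i₀ with rfl | h
    · simpa using erase_subset x (T i)
    · simp [h]
  have hcard : ∀ i, m ≤ #(update T i₀ ((T i₀).erase x) i) := by
    intro i
    rcases eq_or_ne i i₀ with rfl | h
    · simp only [update_self, card_erase_of_mem hx]; omega
    · simpa [h] using hT i
  obtain ⟨U, hUT, hU, hdU⟩ :=
    exists_subbox_card_eq_boxDensity_ge E (update T i₀ ((T i₀).erase x)) hm hcard
  exact ⟨U, fun i => (hUT i).trans (hsub i), hU, hdens.trans hdU⟩
termination_by ∑ i, #(T i)
decreasing_by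
  exact sum_lt_sum (fun i _ => card_le_card (hsub i))
    ⟨i₀, mem_univ _, by simp only [update_self, card_erase_of_mem hx]; omega⟩

def stairBox [LinearOrder ι] (S Y : ι → Finset V) (j : ι) : ι → Finset V :=
  fun i => if i < j then Y i else if i = j then S i \ Y i else S i

lemma forall_mem_stairBox_iff [LinearOrder ι] {S Y : ι → Finset V} {j : ι} {e : ι → V} :
    (∀ i, e i ∈ stairBox S Y j i) ↔
      (∀ i < j, e i ∈ Y i) ∧ e j ∈ S j ∧ e j ∉ Y j ∧ ∀ i, j < i → e i ∈ S i := by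
  refine ⟨fun h => ?_, fun ⟨hlt, hS, hY, hgt⟩ i => ?_⟩
  · have hj : e j ∈ S j ∧ e j ∉ Y j := by simpa [stairBox] using h j
    exact ⟨fun i hi => by simpa [stairBox, hi] using h i, hj.1, hj.2,
      fun i hi => by simpa [stairBox, hi.ne', hi.not_gt] using h i⟩
  · rcases lt_trichotomy i j with hi | rfl | hi
    · simpa [stairBox, hi] using hlt i hi
    · simpa [stairBox] using ⟨hS, hY⟩
    · simpa [stairBox, hi.ne', hi.not_gt] using hgt i hi

lemma card_boxEdges_eq_sum_stairBox [Fintype ι] [LinearOrder ι] (E : Finset (ι → V))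
    {S Y : ι → Finset V} (hYS : ∀ i, Y i ⊆ S i) (hYE : ∀ e ∈ E, ¬ ∀ i, e i ∈ Y i) :
    #(boxEdges E S) = ∑ j, #(boxEdges E (stairBox S Y j)) := by
  have hunion : boxEdges E S = univ.biUnion fun j => boxEdges E (stairBox S Y j) := by
    ext e
    simp only [boxEdges, mem_biUnion, mem_univ, true_and, mem_filter, forall_mem_stairBox_iff]
    constructor
    · rintro ⟨he, hS⟩
      obtain ⟨i, hi⟩ := not_forall.1 (hYE e he)
      obtain ⟨j, hj, hmin⟩ := exists_min_image (univ.filter fun i => e i ∉ Y i) id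
        ⟨i, by simpa using hi⟩
      simp only [mem_filter, mem_univ, true_and, id] at hj hmin
      exact ⟨j, he, fun i hij => not_not.1 fun h => (hmin i h).not_gt hij, hS j, hj,
        fun i _ => hS i⟩
    · rintro ⟨j, he, hlt, hSj, -, hgt⟩
      refine ⟨he, fun i => ?_⟩
      rcases lt_trichotomy i j with hi | rfl | hi
      exacts [hYS i (hlt i hi), hSj, hgt i hi]
  rw [hunion, card_biUnion]
  intro j _ j' _ hjj'
  refine disjoint_left.2 fun e hj hj' => ?_
  simp only [boxEdges, mem_filter, forall_mem_stairBox_iff] at hj hj'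
  rcases hjj'.lt_or_gt with h | h
  exacts [hj.2.2.2.1 (hj'.2.1 j h), hj'.2.2.2.1 (hj.2.1 j' h)]

lemma stairBox_subset [LinearOrder ι] {S Y : ι → Finset V} (hYS : ∀ i, Y i ⊆ S i) (j i : ι) :
    stairBox S Y j i ⊆ S i := by
  unfold stairBox
  split_ifs
  exacts [hYS i, sdiff_subset, subset_rfl]

lemma card_stairBox [LinearOrder ι] {S Y : ι → Finset V} {s y : ℕ} (hS : ∀ i, #(S i) = s)
    (hY : ∀ i, #(Y i) = y) (hYS : ∀ i, Y i ⊆ S i) (j i : ι) :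
    #(stairBox S Y j i) = if i < j then y else if i = j then s - y else s := by
  unfold stairBox
  split_ifs
  exacts [hY i, by rw [card_sdiff_of_subset (hYS i), hS, hY], hS i]

lemma prod_card_stairBox {k : ℕ} {S Y : Fin k → Finset V} {s y : ℕ} (hS : ∀ i, #(S i) = s)
    (hY : ∀ i, #(Y i) = y) (hYS : ∀ i, Y i ⊆ S i) (j : Fin k) :
    ∏ i, #(stairBox S Y j i) = y ^ (j : ℕ) * (s - y) * s ^ (k - 1 - j) := by
  simp_rw [card_stairBox hS hY hYS, Fin.lt_def, Fin.ext_iff]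
  rw [Fin.prod_univ_eq_prod_range (fun i => if i < j then y else if i = j then s - y else s),
    ← prod_range_mul_prod_Ico _ j.is_lt.le, prod_eq_prod_Ico_succ_bot j.is_lt,
    prod_congr (s₁ := range j) rfl (g := fun _ => y) fun i hi => if_pos (mem_range.1 hi),
    prod_congr (s₁ := Ico ((j : ℕ) + 1) k) rfl (g := fun _ => s) fun i hi => by
      rw [mem_Ico] at hi; rw [if_neg (by omega), if_neg (by omega)]]
  simp only [lt_irrefl, if_false, if_true, prod_const, card_range, Nat.card_Ico]
  rw [show k - (j + 1) = k - 1 - j by omega, mul_assoc]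

lemma sum_prod_card_stairBox_mul_rpow_le {k : ℕ} {S Y : Fin k → Finset V} {s y : ℕ} {r : ℝ}
    (hS : ∀ i, #(S i) = s) (hY : ∀ i, #(Y i) = y) (hYS : ∀ i, Y i ⊆ S i) (hy : 0 < y)
    (hys : 2 * y ≤ s) (hr0 : 0 ≤ r) (hr : r ≤ ((y : ℝ) / s) ^ k) :
    ∑ j : Fin k,
        (∏ i, (#(stairBox S Y j i) : ℝ)) * ((if (j : ℕ) = 0 then s - y else y : ℕ) : ℝ) ^ (-r) ≤
      (s : ℝ) ^ k * (s : ℝ) ^ (-r) := by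
  have key := sum_range_pow_mul_rpow_le (by positivity) (by exact_mod_cast hys) hr0 hr
  rw [← Fin.sum_univ_eq_sum_range] at key
  convert key using 2 with j
  rw [← Nat.cast_prod, prod_card_stairBox hS hY hYS j]
  push_cast [Nat.cast_sub (by omega : y ≤ s), apply_ite (Nat.cast (R := ℝ))]
  rfl

lemma exists_stairBox_boxDensity_mul_rpow_ge {k : ℕ} (hk : 0 < k) (E : Finset (Fin k → V))
    {S Y : Fin k → Finset V} {s y : ℕ} {r : ℝ} (hS : ∀ i, #(S i) = s) (hY : ∀ i, #(Y i) = y)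
    (hYS : ∀ i, Y i ⊆ S i) (hYE : ∀ e ∈ E, ¬ ∀ i, e i ∈ Y i) (hy : 0 < y) (hys : 2 * y ≤ s)
    (hr0 : 0 ≤ r) (hr : r ≤ ((y : ℝ) / s) ^ k) :
    ∃ j : Fin k, boxDensity E S * (s : ℝ) ^ r ≤
      boxDensity E (stairBox S Y j) * ((if (j : ℕ) = 0 then s - y else y : ℕ) : ℝ) ^ r := by
  set m : Fin k → ℝ := fun j => ((if (j : ℕ) = 0 then s - y else y : ℕ) : ℝ)
  set vol : Fin k → ℝ := fun j => ∏ i, (#(stairBox S Y j i) : ℝ)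
  have hm : ∀ j, 0 < m j := fun j => by
    simp only [m]; norm_cast; split_ifs <;> omega
  have hvol : ∀ j, 0 < vol j := fun j => prod_pos fun i _ => by
    rw [card_stairBox hS hY hYS]; norm_cast; split_ifs <;> omega
  have hs : (0 : ℝ) < s := by norm_cast; omega
  have hvolS : ∏ i, (#(S i) : ℝ) = (s : ℝ) ^ k := by simp [hS]
  have hsum : ∑ j, boxDensity E S * (s : ℝ) ^ r * (vol j * m j ^ (-r)) ≤
      ∑ j, (#(boxEdges E (stairBox S Y j)) : ℝ) := by
    calc ∑ j, boxDensity E S * (s : ℝ) ^ r * (vol j * m j ^ (-r))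
        = boxDensity E S * (s : ℝ) ^ r * ∑ j, vol j * m j ^ (-r) := by rw [mul_sum]
      _ ≤ boxDensity E S * (s : ℝ) ^ r * ((s : ℝ) ^ k * (s : ℝ) ^ (-r)) := by
        gcongr
        · exact mul_nonneg (boxDensity_nonneg E S) (by positivity)
        · exact sum_prod_card_stairBox_mul_rpow_le hS hY hYS hy hys hr0 hr
      _ = boxDensity E S * ∏ i, (#(S i) : ℝ) := by
        rw [hvolS, rpow_neg hs.le]; field_simp
      _ = ∑ j, (#(boxEdges E (stairBox S Y j)) : ℝ) := by
        rw [boxDensity_mul_prod_card E (by rw [hvolS]; positivity),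
          card_boxEdges_eq_sum_stairBox E hYS hYE, Nat.cast_sum]
  obtain ⟨j, -, hj⟩ := exists_le_of_sum_le (univ_nonempty_iff.2 ⟨⟨0, hk⟩⟩) hsum
  refine ⟨j, ?_⟩
  rw [← boxDensity_mul_prod_card E (hvol j).ne', rpow_neg (hm j).le] at hj
  rw [← div_le_iff₀ (rpow_pos_of_pos (hm j) r)]
  refine le_of_mul_le_mul_right ?_ (hvol j)
  calc boxDensity E S * (s : ℝ) ^ r / m j ^ r * vol j
      = boxDensity E S * (s : ℝ) ^ r * (vol j * (m j ^ r)⁻¹) := by ring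
    _ ≤ _ := hj

lemma exists_smaller_box_boxDensity_mul_rpow_ge {k : ℕ} (hk : 0 < k) (E : Finset (Fin k → V))
    {S Y : Fin k → Finset V} {s y : ℕ} {r : ℝ} (hS : ∀ i, #(S i) = s) (hYS : ∀ i, Y i ⊆ S i)
    (hY : ∀ i, y ≤ #(Y i)) (hYE : ∀ e ∈ E, ¬ ∀ i, e i ∈ Y i) (hy : 0 < y) (hys : 2 * y ≤ s)
    (hr0 : 0 ≤ r) (hr : r ≤ ((y : ℝ) / s) ^ k) :
    ∃ (m : ℕ) (U : Fin k → Finset V), 0 < m ∧ m < s ∧ (∀ i, U i ⊆ S i) ∧ (∀ i, #(U i) = m) ∧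
      boxDensity E S * (s : ℝ) ^ r ≤ boxDensity E U * (m : ℝ) ^ r := by
  choose Y' hY'Y hY' using fun i => exists_subset_card_eq (hY i)
  have hY'S : ∀ i, Y' i ⊆ S i := fun i => (hY'Y i).trans (hYS i)
  obtain ⟨j, hj⟩ := exists_stairBox_boxDensity_mul_rpow_ge hk E hS hY' hY'S
    (fun e he h => hYE e he fun i => hY'Y i (h i)) hy hys hr0 hr
  obtain ⟨U, hUB, hU, hdU⟩ := exists_subbox_card_eq_boxDensity_ge E (stairBox S Y' j)
    (m := if (j : ℕ) = 0 then s - y else y) (by split_ifs <;> omega) fun i => by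
      rw [card_stairBox hS hY' hY'S]
      split_ifs <;> omega
  refine ⟨_, U, by split_ifs <;> omega, by split_ifs <;> omega,
    fun i => (hUB i).trans (stairBox_subset hY'S j i), hU, hj.trans ?_⟩
  gcongr

lemma exists_minimal_box [Fintype ι] (E : Finset (ι → V)) {X : ι → Finset V} {n : ℕ} {r a : ℝ}
    (hn : 0 < n) (hX : ∀ i, #(X i) = n) (ha : a ≤ boxDensity E X * (n : ℝ) ^ r) :
    ∃ (s : ℕ) (S : ι → Finset V), 0 < s ∧ (∀ i, S i ⊆ X i) ∧ (∀ i, #(S i) = s) ∧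
      a ≤ boxDensity E S * (s : ℝ) ^ r ∧
      ∀ m < s, 0 < m → ∀ U : ι → Finset V, (∀ i, U i ⊆ S i) → (∀ i, #(U i) = m) →
        boxDensity E U * (m : ℝ) ^ r < a := by
  have hex : ∃ t, 0 < t ∧ ∃ S : ι → Finset V, (∀ i, S i ⊆ X i) ∧ (∀ i, #(S i) = t) ∧
      a ≤ boxDensity E S * (t : ℝ) ^ r := ⟨n, hn, X, fun _ => subset_rfl, hX, ha⟩
  obtain ⟨hs, S, hSX, hS, hSa⟩ := Nat.find_spec hex
  refine ⟨_, S, hs, hSX, hS, hSa, fun m hms hm U hUS hU => not_le.1 fun hUa => ?_⟩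
  exact Nat.find_min hex hms ⟨hm, U, fun i => (hUS i).trans (hSX i), hU, hUa⟩

lemma exists_edge_of_minimal_box {k : ℕ} (hk : 0 < k) (E : Finset (Fin k → V))
    {S Y : Fin k → Finset V} {s : ℕ} {ε : ℝ} (hS : ∀ i, #(S i) = s) (hε : 0 < ε)
    (hs : 2 ≤ (1 - 2 * ε) * s)
    (hmin : ∀ m < s, 0 < m → ∀ U : Fin k → Finset V, (∀ i, U i ⊆ S i) → (∀ i, #(U i) = m) →
      boxDensity E U * (m : ℝ) ^ ε ^ k < boxDensity E S * (s : ℝ) ^ ε ^ k)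
    (hYS : ∀ i, Y i ⊆ S i) (hY : ∀ i, ε * s ≤ #(Y i)) :
    ∃ e ∈ E, ∀ i, e i ∈ Y i := by
  by_contra! hYE
  have hs0 : (0 : ℝ) < s := by nlinarith
  have hy : 0 < ⌈ε * s⌉₊ := Nat.ceil_pos.2 (by positivity)
  have hys : 2 * ⌈ε * s⌉₊ ≤ s := by
    have := Nat.ceil_lt_add_one (by positivity : 0 ≤ ε * s)
    exact_mod_cast (by linarith : (2 * ⌈ε * s⌉₊ : ℝ) ≤ s)
  have hr : ε ^ k ≤ ((⌈ε * s⌉₊ : ℝ) / s) ^ k :=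
    pow_le_pow_left₀ hε.le ((le_div_iff₀ hs0).2 (Nat.le_ceil _)) k
  obtain ⟨m, U, hm, hms, hUS, hU, hdU⟩ := exists_smaller_box_boxDensity_mul_rpow_ge hk E hS hYS
    (fun i => Nat.ceil_le.2 (hY i)) (fun e he h => (hYE e he).elim fun i hi => hi (h i)) hy hys
    (by positivity) hr
  exact (hmin m hms hm U hUS hU).not_ge hdU

end

/-- **Weak regularity lemma for hypergraphs.** For every `k ≥ 1`, `β > 0` and
`0 < ε < 1/2` there is `n₀` such that for every `n ≥ n₀`, every `k`-partite `k`-uniform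
hypergraph `E ⊆ X 0 × ⋯ × X (k-1)` on pairwise disjoint `n`-element vertex classes with
at least `β n^k` edges admits subsets `S i ⊆ X i` of equal size `s ≥ β^(1/ε^k) n`
such that the density on `S 0, …, S (k-1)` is at least `β` and every choice of subsets
`Y i ⊆ S i` with `|Y i| ≥ ε s` induces an edge. -/
theorem weak_hypergraph_regularity (k : ℕ) (hk : 0 < k) (β ε : ℝ)
    (hβ : 0 < β) (hε0 : 0 < ε) (hε : ε < 1 / 2) :
    ∃ n₀ : ℕ, ∀ n : ℕ, n₀ ≤ n →
      ∀ (V : Type) (X : Fin k → Finset V) (E : Finset (Fin k → V)),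
        (∀ i j, i ≠ j → Disjoint (X i) (X j)) →
        (∀ i, (X i).card = n) →
        (∀ e ∈ E, ∀ i, e i ∈ X i) →
        β * (n : ℝ) ^ k ≤ (E.card : ℝ) →
        ∃ (S : Fin k → Finset V) (s : ℕ),
          (∀ i, S i ⊆ X i) ∧
          (∀ i, (S i).card = s) ∧
          β ^ (1 / ε ^ k) * (n : ℝ) ≤ (s : ℝ) ∧
          β * (s : ℝ) ^ k ≤ ((E.filter (fun e => ∀ i, e i ∈ S i)).card : ℝ) ∧
          ∀ Y : Fin k → Finset V,
            (∀ i, Y i ⊆ S i) → (∀ i, ε * (s : ℝ) ≤ ((Y i).card : ℝ)) →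
            ∃ e ∈ E, ∀ i, e i ∈ Y i := by
  have hε2 : 0 < 1 - 2 * ε := by linarith
  refine ⟨⌈2 / ((1 - 2 * ε) * β ^ (1 / ε ^ k))⌉₊, fun n hn V X E _ hX hE hE_card => ?_⟩
  have hn2 : 2 ≤ (1 - 2 * ε) * β ^ (1 / ε ^ k) * n :=
    (div_le_iff₀' (by positivity)).1 (Nat.ceil_le.1 hn)
  have hn0 : 0 < n := Nat.pos_of_ne_zero (by rintro rfl; norm_num at hn2)
  have hdX : β ≤ boxDensity E X := by
    rw [boxDensity, boxEdges_eq_self hE, le_div_iff₀ (by simp [hX, hn0])]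
    simpa [hX] using hE_card
  obtain ⟨s, S, hs0, hSX, hS, hSa, hmin⟩ := exists_minimal_box E hn0 hX (r := ε ^ k)
    (mul_le_mul_of_nonneg_right hdX (by positivity))
  have hsn : (s : ℝ) ≤ n := by
    exact_mod_cast hS ⟨0, hk⟩ ▸ hX ⟨0, hk⟩ ▸ card_le_card (hSX ⟨0, hk⟩)
  have hsize : β ^ (1 / ε ^ k) * n ≤ s := rpow_one_div_mul_le_of_mul_rpow_le hβ (by positivity)
    (Nat.cast_nonneg _) (Nat.cast_nonneg _)
    (hSa.trans (mul_le_of_le_one_left (by positivity) (boxDensity_le_one E S)))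
  have hdS : β ≤ boxDensity E S := le_of_mul_le_mul_right
    (hSa.trans (by gcongr; exact boxDensity_nonneg E S)) (by positivity : (0 : ℝ) < n ^ ε ^ k)
  refine ⟨S, s, hSX, hS, hsize, ?_, fun Y hYS hY => exists_edge_of_minimal_box hk E hS hε0 ?_
    (fun m hms hm U hUS hU => (hmin m hms hm U hUS hU).trans_le hSa) hYS hY⟩
  · have hvol : ∏ i, (#(S i) : ℝ) = (s : ℝ) ^ k := by simp [hS]
    -- the two filters differ only in their decidability instances
    rw [show E.filter (fun e => ∀ i, e i ∈ S i) = boxEdges E S by unfold boxEdges; congr!,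
      ← boxDensity_mul_prod_card E (by rw [hvol]; positivity), hvol]
    gcongr
  · nlinarith
end

section
/- Let (Y_1, ..., Y_{d+1}, p) be a generic Pach's configuration in ℝ^d and let H be any hyperplane passing through p. Then for each of the two open half-spaces determined by H there is an index ℓ ∈ [d+1] such that Y_ℓ is fully contained in that open half-space. -/
/-!
Suppose every `Y ℓ` had a point `y ℓ` in the closed half-space `⟪·, w⟫ ≤ b`. Then `p`, which
lies on the hyperplane `H`, is a convex combination of the `y ℓ`, and since `H` supports their
convex hull, only the `y ℓ` lying on `H` can carry weight. These points are affinely independent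
and lie in the `(d - 1)`-dimensional `H`, so there are at most `d` of them; adding `p`, which lies
in their affine span, gives at most `d + 1` affinely dependent points, contradicting general
position.
-/

open scoped RealInnerProductSpace

/-- A set `X ⊆ ℝ^d` is in general position if every subset of at most `d + 1` of its
points is affinely independent. -/
def InGenPos (d : ℕ) (X : Set (EuclideanSpace ℝ (Fin d))) : Prop :=
  ∀ S : Finset (EuclideanSpace ℝ (Fin d)), ↑S ⊆ X → S.card ≤ d + 1 →
    AffineIndependent ℝ
      (fun x : (S : Set (EuclideanSpace ℝ (Fin d))) => (x : EuclideanSpace ℝ (Fin d)))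

/-- A generic Pach's configuration: finite pairwise disjoint nonempty sets
`Y 0, …, Y d ⊆ ℝ^d` and a point `p ∉ Y 0 ∪ ⋯ ∪ Y d` such that
`Y 0 ∪ ⋯ ∪ Y d ∪ {p}` is in general position and `p` belongs to every
`(Y 0, …, Y d)`-simplex. -/
def GenericPachConfig (d : ℕ) (Y : Fin (d + 1) → Finset (EuclideanSpace ℝ (Fin d)))
    (p : EuclideanSpace ℝ (Fin d)) : Prop :=
  (∀ i, (Y i).Nonempty) ∧
  (∀ i j, i ≠ j → Disjoint (Y i) (Y j)) ∧
  p ∉ ⋃ i, (Y i : Set (EuclideanSpace ℝ (Fin d))) ∧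
  InGenPos d ((⋃ i, (Y i : Set (EuclideanSpace ℝ (Fin d)))) ∪ {p}) ∧
  ∀ y : Fin (d + 1) → EuclideanSpace ℝ (Fin d),
    (∀ i, y i ∈ Y i) → p ∈ convexHull ℝ (Set.range y)

open Finset Module

theorem mem_convexHull_filter_eq_of_forall_le {E : Type*} [AddCommGroup E] [Module ℝ E]
    {s : Finset E} {f : Dual ℝ E} {b : ℝ} {x : E} (hs : ∀ y ∈ s, f y ≤ b)
    (hx : x ∈ convexHull ℝ (s : Set E)) (hfx : f x = b) :
    x ∈ convexHull ℝ (↑(s.filter (f · = b)) : Set E) := by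
  obtain ⟨c, hc0, hc1, hcx⟩ := Finset.mem_convexHull'.1 hx
  have hslack : ∑ y ∈ s, c y * (b - f y) = 0 := by
    simp only [mul_sub, sum_sub_distrib, ← sum_mul, hc1, one_mul]
    rw [← hfx, ← hcx, map_sum]
    simp
  have hsupp : ∀ y ∈ s, c y ≠ 0 → f y = b := by
    intro y hy hcy
    have hterm := (sum_eq_zero_iff_of_nonneg fun z hz =>
      mul_nonneg (hc0 z hz) (sub_nonneg.2 (hs z hz))).1 hslack y hy
    linarith [(mul_eq_zero.1 hterm).resolve_left hcy]
  refine Finset.mem_convexHull'.2 ⟨c, fun y hy => hc0 y (mem_filter.1 hy).1, ?_, ?_⟩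
  · rwa [sum_filter_of_ne hsupp]
  · rwa [sum_filter_of_ne fun y hy hcy => hsupp y hy (left_ne_zero_of_smul hcy)]

theorem AffineIndependent.card_le_finrank_of_forall_eq_s16 {k E : Type*} [Field k] [AddCommGroup E]
    [Module k E] [FiniteDimensional k E] {s : Finset E}
    (hs : AffineIndependent k ((↑) : ↥(s : Set E) → E)) {f : Dual k E} (hf : f ≠ 0) {b : k}
    (hsf : ∀ x ∈ s, f x = b) : #s ≤ finrank k E := by
  have hspan : vectorSpan k (s : Set E) ≤ LinearMap.ker f := by
    rw [vectorSpan_def, Submodule.span_le]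
    rintro _ ⟨x, hx, y, hy, rfl⟩
    simp [hsf x hx, hsf y hy]
  have hcard := hs.card_le_finrank_succ
  rw [Subtype.range_coe] at hcard
  simp only [SetLike.mem_coe, Fintype.card_coe] at hcard
  have hspan_le := Submodule.finrank_mono hspan
  have hker := Dual.finrank_ker_add_one_of_ne_zero hf
  omega

theorem InGenPos.notMem_affineSpan {d : ℕ} {X : Set (EuclideanSpace ℝ (Fin d))}
    (hX : InGenPos d X) {S : Finset (EuclideanSpace ℝ (Fin d))} (hSX : ↑S ⊆ X) (hS : #S ≤ d)
    {p : EuclideanSpace ℝ (Fin d)} (hpX : p ∈ X) (hpS : p ∉ S) :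
    p ∉ affineSpan ℝ (S : Set (EuclideanSpace ℝ (Fin d))) := by
  have hind := hX (insert p S) (by simpa [Set.insert_subset_iff] using ⟨hpX, hSX⟩)
    ((card_insert_le p S).trans (by omega))
  have hp := hind.notMem_affineSpan_sdiff ⟨p, mem_insert_self p S⟩ Set.univ
  rw [Set.image_sdiff Subtype.val_injective, Set.image_univ, Subtype.range_coe,
    Set.image_singleton] at hp
  simpa only [coe_insert, Set.insert_sdiff_self_of_notMem (mod_cast hpS)] using hp

theorem GenericPachConfig.exists_forall_lt {d : ℕ}
    {Y : Fin (d + 1) → Finset (EuclideanSpace ℝ (Fin d))} {p : EuclideanSpace ℝ (Fin d)}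
    (hconf : GenericPachConfig d Y p) {f : Dual ℝ (EuclideanSpace ℝ (Fin d))} (hf : f ≠ 0)
    {b : ℝ} (hp : f p = b) : ∃ l, ∀ y ∈ Y l, b < f y := by
  classical
  obtain ⟨-, -, hpY, hgen, hsimplex⟩ := hconf
  by_contra! hlow
  choose y hyY hyb using hlow
  set S := (univ.image y).filter (f · = b)
  have hSY : (S : Set _) ⊆ ⋃ i, (Y i : Set (EuclideanSpace ℝ (Fin d))) := by
    rintro _ hx
    obtain ⟨i, -, rfl⟩ := mem_image.1 (mem_filter.1 hx).1
    exact Set.mem_iUnion.2 ⟨i, hyY i⟩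
  have hpS : p ∈ convexHull ℝ (S : Set _) :=
    mem_convexHull_filter_eq_of_forall_le (by simpa using hyb) (by simpa using hsimplex y hyY) hp
  have hSd : #S ≤ d := by
    have hind := hgen S (hSY.trans Set.subset_union_left)
      ((card_filter_le _ _).trans (card_image_le.trans (by simp)))
    simpa using hind.card_le_finrank_of_forall_eq_s16 hf fun x hx => (mem_filter.1 hx).2
  exact hgen.notMem_affineSpan (hSY.trans Set.subset_union_left) hSd (Or.inr rfl)
    (fun h => hpY (hSY h)) (convexHull_subset_affineSpan _ hpS)

/-- **Cutting a generic Pach's configuration by a hyperplane through `p`.** If `H` is a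
hyperplane through `p` then each of the two open half-spaces determined by `H` fully
contains one of the sets `Y ℓ`. -/
theorem hyperplane_through_p_contains_some_Y {d : ℕ}
    (Y : Fin (d + 1) → Finset (EuclideanSpace ℝ (Fin d)))
    (p : EuclideanSpace ℝ (Fin d))
    (hconf : GenericPachConfig d Y p)
    (w : EuclideanSpace ℝ (Fin d)) (b : ℝ) (hw : w ≠ 0) (hp : ⟪p, w⟫ = b) :
    (∃ l : Fin (d + 1), ∀ y ∈ Y l, b < ⟪y, w⟫) ∧
    (∃ l : Fin (d + 1), ∀ y ∈ Y l, ⟪y, w⟫ < b) := by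
  have hf : innerₛₗ ℝ w ≠ 0 := fun h => hw (by simpa using LinearMap.congr_fun h w)
  refine ⟨?_, ?_⟩
  · simpa [real_inner_comm] using hconf.exists_forall_lt hf (by simpa [real_inner_comm] using hp)
  · simpa [real_inner_comm] using
      hconf.exists_forall_lt (neg_ne_zero.2 hf) (b := -b) (by simp [real_inner_comm, hp])
end

section
/- Let C ⊆ ℝ^k be a simplicial cone with apex at the origin, i.e., C = {λ_1 v_1 + ... + λ_k v_k : λ_1, ..., λ_k ≥ 0} for some linearly independent vectors v_1, ..., v_k ∈ ℝ^k, and let C' = {y ∈ ℝ^k : ⟨y, x⟩ ≥ 0 for all x ∈ C} be its dual cone. Then the intersection C ∩ C' has nonempty interior. -/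
/-!
Let `w` be the point of minimal norm in the simplex spanned by the `v i`. It lies in the cone,
and since `0` is not in the simplex, the variational inequality of the nearest point gives
`⟪w, v i⟫ ≥ ‖w‖² > 0` for every `i`. Moving `w` slightly along `∑ i, v i` makes all of its
coordinates positive while keeping these inner products positive. The points with all
coordinates and all inner products `⟪·, v i⟫` positive form an open set contained in `C ∩ C'`.
-/

open scoped RealInnerProductSpace
open Filter Topology

theorem exists_mem_forall_inner_pos_of_zero_notMem {F : Type*} [NormedAddCommGroup F]
    [InnerProductSpace ℝ F] {K : Set F} (hne : K.Nonempty) (hc : IsComplete K)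
    (hK : Convex ℝ K) (h0 : (0 : F) ∉ K) : ∃ w ∈ K, ∀ y ∈ K, 0 < ⟪w, y⟫ := by
  obtain ⟨w, hwK, hwmin⟩ := exists_norm_eq_iInf_of_complete_convex hne hc hK 0
  have hw : 0 < ‖w‖ ^ 2 := by
    have : w ≠ 0 := fun h => h0 (h ▸ hwK)
    positivity
  refine ⟨w, hwK, fun y hy => ?_⟩
  have hvar := (norm_eq_iInf_iff_real_inner_le_zero hK hwK).mp hwmin y hy
  rw [zero_sub, inner_neg_left, inner_sub_right, real_inner_self_eq_norm_sq] at hvar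
  linarith

variable {E : Type*} [NormedAddCommGroup E] [InnerProductSpace ℝ E] {ι : Type*} [Fintype ι]

theorem LinearIndependent.exists_nonneg_forall_inner_sum_pos {v : ι → E}
    (hv : LinearIndependent ℝ v) :
    ∃ l : ι → ℝ, (∀ i, 0 ≤ l i) ∧ ∀ j, 0 < ⟪∑ i, l i • v i, v j⟫ := by
  classical
  rcases isEmpty_or_nonempty ι with hι | ⟨⟨i₀⟩⟩
  · exact ⟨0, fun _ => le_rfl, isEmptyElim⟩
  set f := Fintype.linearCombination ℝ v
  have hvertex : ∀ j, v j ∈ f '' stdSimplex ℝ ι := fun j =>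
    ⟨Pi.single j 1, single_mem_stdSimplex ℝ j, by simp [f]⟩
  have hzero : (0 : E) ∉ f '' stdSimplex ℝ ι := by
    rintro ⟨l, hl, hl0⟩
    have : l = 0 := funext (Fintype.linearIndependent_iff.mp hv l hl0)
    simpa [this] using hl.2
  obtain ⟨w, ⟨l, hl, rfl⟩, hw⟩ := exists_mem_forall_inner_pos_of_zero_notMem ⟨_, hvertex i₀⟩
    ((isCompact_stdSimplex ℝ ι).image (LinearMap.continuous_of_finiteDimensional f)).isComplete
    ((convex_stdSimplex ℝ ι).linear_image f) hzero
  exact ⟨l, hl.1, fun j => hw (v j) (hvertex j)⟩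

theorem Module.Basis.exists_forall_equivFun_pos_forall_inner_pos (b : Module.Basis ι ℝ E)
    {l : ι → ℝ} (hl : ∀ i, 0 ≤ l i) (hpos : ∀ j, 0 < ⟪∑ i, l i • b i, b j⟫) :
    ∃ y, (∀ i, 0 < b.equivFun y i) ∧ ∀ j, 0 < ⟪y, b j⟫ := by
  set s := b.equivFun.symm 1
  have hsmall : ∀ᶠ ε in 𝓝[>] (0 : ℝ), ∀ j, 0 < ⟪∑ i, l i • b i + ε • s, b j⟫ := by
    refine eventually_nhdsWithin_of_eventually_nhds (eventually_all.mpr fun j => ?_)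
    simp only [inner_add_left, real_inner_smul_left]
    exact (continuous_const.add (continuous_id.mul continuous_const)).continuousAt.eventually
      (lt_mem_nhds (by simpa using hpos j))
  obtain ⟨ε, hε, hεpos⟩ := (hsmall.and self_mem_nhdsWithin).exists
  refine ⟨∑ i, l i • b i + ε • s, fun i => ?_, hε⟩
  rw [← b.equivFun_symm_apply, ← map_smul, ← map_add, LinearEquiv.apply_symm_apply]
  simpa using add_pos_of_nonneg_of_pos (hl i) hεpos

theorem Module.Basis.subset_interior_cone_inter_dual (b : Module.Basis ι ℝ E) :
    {x | ∀ i, 0 < b.equivFun x i} ∩ {x | ∀ j, 0 < ⟪x, b j⟫} ⊆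
      interior ({x | ∃ l : ι → ℝ, (∀ i, 0 ≤ l i) ∧ x = ∑ i, l i • b i} ∩
        {y | ∀ x, (∃ l : ι → ℝ, (∀ i, 0 ≤ l i) ∧ x = ∑ i, l i • b i) → 0 ≤ ⟪y, x⟫}) := by
  refine interior_maximal ?_ ?_
  · rintro x ⟨hcoord, hinner⟩
    refine ⟨⟨b.equivFun x, fun i => (hcoord i).le, (b.sum_equivFun x).symm⟩, ?_⟩
    rintro _ ⟨l, hl, rfl⟩
    rw [inner_sum]
    exact Finset.sum_nonneg fun i _ => by
      rw [real_inner_smul_right]; exact mul_nonneg (hl i) (hinner i).le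
  · simp only [Set.ofPred_forall]
    exact (isOpen_iInter_of_finite fun i => isOpen_lt continuous_const
      ((continuous_apply i).comp (continuous_equivFun_basis b))).inter
      (isOpen_iInter_of_finite fun j => isOpen_lt continuous_const (by fun_prop))

/-- **A simplicial cone and its dual cone have an intersection with nonempty interior.**
If `C ⊆ ℝ^k` is the cone of nonnegative combinations of `k` linearly independent vectors
and `C' = {y : ⟨y, x⟩ ≥ 0 for all x ∈ C}` is its dual cone, then `C ∩ C'` has nonempty
interior. -/
theorem simplicial_cone_meets_dual (k : ℕ)
    (v : Fin k → EuclideanSpace ℝ (Fin k)) (hv : LinearIndependent ℝ v) :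
    (interior
      ({x : EuclideanSpace ℝ (Fin k) |
          ∃ l : Fin k → ℝ, (∀ i, 0 ≤ l i) ∧ x = ∑ i, l i • v i} ∩
       {y : EuclideanSpace ℝ (Fin k) |
          ∀ x : EuclideanSpace ℝ (Fin k),
            (∃ l : Fin k → ℝ, (∀ i, 0 ≤ l i) ∧ x = ∑ i, l i • v i) →
            0 ≤ ⟪y, x⟫})).Nonempty := by
  obtain ⟨b, rfl⟩ : ∃ b : Module.Basis (Fin k) ℝ (EuclideanSpace ℝ (Fin k)), ⇑b = v :=
    ⟨_, coe_basisOfLinearIndependentOfCardEqFinrank' v hv (by simp)⟩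
  obtain ⟨l, hl, hpos⟩ := b.linearIndependent.exists_nonneg_forall_inner_sum_pos
  obtain ⟨y, hy⟩ := b.exists_forall_equivFun_pos_forall_inner_pos hl hpos
  exact ⟨y, b.subset_interior_cone_inter_dual hy⟩
end

section
/- Let d be a positive integer, let a ∈ ℝ^d and let v_1, ..., v_d be unit vectors in ℝ^d with ⟨v_i, v_j⟩ ≥ 0 for all i, j ∈ [d]. Let C = conv(⋃_{i∈[d]} {a + λ v_i : λ ≥ 0}), and call a unit vector w admissible for C if a + w ∈ C. Then for every ε > 0 there exists δ > 0 such that for all a' ∈ ℝ^d and all linearly independent unit vectors v'_1, ..., v'_d with ⟨v'_i, v'_j⟩ > 0 for all i, j, if ‖a − a'‖ < δ and ‖v_i − v'_i‖ < δ for every i ∈ [d], then every unit vector w' with a' + w' ∈ conv(⋃_{i∈[d]} {a' + λ v'_i : λ ≥ 0}) satisfies ‖w − w'‖ ≤ ε for some admissible vector w of C. -/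
/-!
Write `a' + w' = a' + ∑ cᵢ v'ᵢ` with `cᵢ ≥ 0`. Because the `v'ᵢ` are pairwise at non-obtuse
angles, `cᵢ ≤ ⟪w', v'ᵢ⟫ ≤ 1`, so `u = ∑ cᵢ vᵢ` is within `d δ` of `w'`. Then `u / ‖u‖` lies in
`C(a, v)` and is within `2 d δ` of `w'`.
-/

open scoped RealInnerProductSpace
open Finset

section Module

variable {E ι : Type*} [AddCommGroup E] [Module ℝ E] [Fintype ι]

theorem mem_convexHull_rays_iff [Nonempty ι] (a : E) (v : ι → E) {x : E} :
    x ∈ convexHull ℝ (⋃ i, {x : E | ∃ l : ℝ, 0 ≤ l ∧ x = a + l • v i}) ↔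
      ∃ c : ι → ℝ, (∀ i, 0 ≤ c i) ∧ x = a + ∑ i, c i • v i := by
  constructor
  · refine fun hx => convexHull_min
      (t := {x | ∃ c : ι → ℝ, (∀ i, 0 ≤ c i) ∧ x = a + ∑ i, c i • v i}) ?_ ?_ hx
    · simp only [Set.iUnion_subset_iff]
      rintro i _ ⟨l, hl, rfl⟩
      classical
      refine ⟨Pi.single i l, fun j => ?_, by simp [Pi.single_apply, ite_smul]⟩
      by_cases hj : j = i <;> simp [hj, hl]
    · rintro _ ⟨c, hc, rfl⟩ _ ⟨c', hc', rfl⟩ p q hp hq hpq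
      refine ⟨fun i => p * c i + q * c' i,
        fun i => add_nonneg (mul_nonneg hp (hc i)) (mul_nonneg hq (hc' i)), ?_⟩
      simp only [smul_add, smul_sum, smul_smul, add_smul, sum_add_distrib]
      rw [add_add_add_comm, ← add_smul, hpq, one_smul]
  · rintro ⟨c, hc, rfl⟩
    set n : ℝ := (Fintype.card ι : ℝ)
    have hn : 0 < n := Nat.cast_pos.2 Fintype.card_pos
    -- average of the points `a + (n cᵢ) • vᵢ` on the rays
    have hmem := (convex_convexHull ℝ (⋃ i, {x : E | ∃ l : ℝ, 0 ≤ l ∧ x = a + l • v i})).sum_mem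
      (t := univ) (w := fun _ => n⁻¹) (z := fun i => a + (n * c i) • v i)
      (fun _ _ => inv_nonneg.2 hn.le) (by simp [n, hn.ne'])
      (fun i _ => subset_convexHull ℝ _ <|
        Set.mem_iUnion.2 ⟨i, n * c i, mul_nonneg hn.le (hc i), rfl⟩)
    convert hmem using 1
    simp only [smul_add, sum_add_distrib, sum_const, card_univ, smul_smul]
    rw [← Nat.cast_smul_eq_nsmul ℝ, smul_smul, mul_inv_cancel₀ hn.ne', one_smul]
    congr 1
    exact sum_congr rfl fun i _ => by rw [inv_mul_cancel_left₀ hn.ne']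

end Module

section Normed

variable {E ι : Type*} [SeminormedAddCommGroup E] [NormedSpace ℝ E] [Fintype ι]

theorem norm_sum_smul_sub_sum_smul_le (c : ι → ℝ) (v v' : ι → E) :
    ‖∑ i, c i • v i - ∑ i, c i • v' i‖ ≤ ∑ i, |c i| * ‖v i - v' i‖ := by
  rw [← sum_sub_distrib]
  refine (norm_sum_le _ _).trans (sum_le_sum fun i _ => ?_)
  rw [← smul_sub, norm_smul, Real.norm_eq_abs]

theorem norm_inv_norm_smul_sub_le {u w : E} (hw : ‖w‖ = 1) :
    ‖‖u‖⁻¹ • u - w‖ ≤ 2 * ‖u - w‖ := by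
  have hscale : ‖‖u‖⁻¹ • u - u‖ ≤ |1 - ‖u‖| := by
    rcases eq_or_ne ‖u‖ 0 with hu | hu
    · simp [hu]
    rw [show ‖u‖⁻¹ • u - u = (‖u‖⁻¹ - 1) • u by rw [sub_smul, one_smul], norm_smul,
      Real.norm_eq_abs, ← abs_norm u, ← abs_mul, abs_norm, sub_mul, inv_mul_cancel₀ hu, one_mul,
      abs_sub_comm]
  have hnorm : |1 - ‖u‖| ≤ ‖u - w‖ := by
    simpa [hw, norm_sub_rev] using abs_norm_sub_norm_le w u
  calc ‖‖u‖⁻¹ • u - w‖ ≤ ‖‖u‖⁻¹ • u - u‖ + ‖u - w‖ := norm_sub_le_norm_sub_add_norm_sub _ _ _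
    _ ≤ 2 * ‖u - w‖ := by linarith

end Normed

theorem le_norm_sum_smul_of_inner_nonneg {E ι : Type*} [NormedAddCommGroup E]
    [InnerProductSpace ℝ E] [Fintype ι] {v : ι → E} (hv : ∀ i, ‖v i‖ = 1)
    (hv0 : ∀ i j, 0 ≤ ⟪v i, v j⟫) {c : ι → ℝ} (hc : ∀ i, 0 ≤ c i) (i : ι) :
    c i ≤ ‖∑ j, c j • v j‖ :=
  calc c i = c i * ⟪v i, v i⟫ := by rw [real_inner_self_eq_norm_sq, hv i]; ring
    _ ≤ ∑ j, c j * ⟪v j, v i⟫ :=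
      single_le_sum (f := fun j => c j * ⟪v j, v i⟫) (fun j _ => mul_nonneg (hc j) (hv0 j i))
        (mem_univ i)
    _ = ⟪∑ j, c j • v j, v i⟫ := by simp only [sum_inner, real_inner_smul_left]
    _ ≤ ‖∑ j, c j • v j‖ := by simpa [hv i] using real_inner_le_norm (∑ j, c j • v j) (v i)

theorem acute_cone_admissible_limit_general {d : ℕ} (hd : 0 < d)
    (a : EuclideanSpace ℝ (Fin d)) (v : Fin d → EuclideanSpace ℝ (Fin d)) :
    ∀ ε : ℝ, 0 < ε → ∃ δ : ℝ, 0 < δ ∧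
      ∀ (a' : EuclideanSpace ℝ (Fin d)) (v' : Fin d → EuclideanSpace ℝ (Fin d)),
        LinearIndependent ℝ v' →
        (∀ i, ‖v' i‖ = 1) →
        (∀ i j, 0 < ⟪v' i, v' j⟫) →
        ‖a - a'‖ < δ →
        (∀ i, ‖v i - v' i‖ < δ) →
        ∀ w' : EuclideanSpace ℝ (Fin d), ‖w'‖ = 1 →
          a' + w' ∈ convexHull ℝ
            (⋃ i, {x : EuclideanSpace ℝ (Fin d) | ∃ l : ℝ, 0 ≤ l ∧ x = a' + l • v' i}) →
          ∃ w : EuclideanSpace ℝ (Fin d), ‖w‖ = 1 ∧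
            a + w ∈ convexHull ℝ
              (⋃ i, {x : EuclideanSpace ℝ (Fin d) | ∃ l : ℝ, 0 ≤ l ∧ x = a + l • v i}) ∧
            ‖w - w'‖ ≤ ε := by
  intro ε hε
  have : Nonempty (Fin d) := Fin.pos_iff_nonempty.mp hd
  have hd' : (0 : ℝ) < d := Nat.cast_pos.2 hd
  refine ⟨min ε 1 / (2 * d), by positivity, ?_⟩
  intro a' v' _ hv'1 hv'pos _ hvv' w' hw' hmem
  obtain ⟨c, hc, hw'c⟩ := (mem_convexHull_rays_iff a' v').1 hmem
  rw [add_right_inj] at hw'c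
  have hc1 (i : Fin d) : c i ≤ 1 :=
    hw' ▸ hw'c ▸ le_norm_sum_smul_of_inner_nonneg hv'1 (fun i j => (hv'pos i j).le) hc i
  set u := ∑ i, c i • v i
  have hu : ‖u - w'‖ ≤ min ε 1 / 2 :=
    calc ‖u - w'‖ ≤ ∑ i, |c i| * ‖v i - v' i‖ := hw'c ▸ norm_sum_smul_sub_sum_smul_le c v v'
      _ ≤ ∑ _i : Fin d, min ε 1 / (2 * d) := sum_le_sum fun i _ => by
          rw [abs_of_nonneg (hc i)]
          exact (mul_le_of_le_one_left (norm_nonneg _) (hc1 i)).trans (hvv' i).le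
      _ = min ε 1 / 2 := by
          simp only [sum_const, card_univ, Fintype.card_fin, nsmul_eq_mul]
          field_simp
  have hu0 : u ≠ 0 := by
    rintro h
    rw [h, zero_sub, norm_neg, hw'] at hu
    linarith [min_le_right ε 1]
  refine ⟨‖u‖⁻¹ • u, norm_smul_inv_norm hu0, ?_, ?_⟩
  · refine (mem_convexHull_rays_iff a v).2
      ⟨fun i => ‖u‖⁻¹ * c i, fun i => mul_nonneg (inv_nonneg.2 (norm_nonneg u)) (hc i), ?_⟩
    simp only [u, smul_sum, smul_smul]
  · linarith [norm_inv_norm_smul_sub_le (u := u) hw', min_le_left ε 1]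

/-- **Continuity of admissible vectors of acute simplicial cones.** Let
`C = C(a, v 0, …, v (d-1))` be the cone generated by the rays from `a` in the directions
of the unit vectors `v i`, with `⟨v i, v j⟩ ≥ 0` for all `i, j`. For every `ε > 0` there
is `δ > 0` such that for every acute simplicial cone `C(a', v' 0, …, v' (d-1))` with
`‖a - a'‖ < δ` and `‖v i - v' i‖ < δ` for every `i`, every admissible vector `w'` of the
cone `C(a', v')` is within distance `ε` of some admissible vector `w` of `C`. -/
theorem acute_cone_admissible_limit {d : ℕ} (hd : 0 < d)
    (a : EuclideanSpace ℝ (Fin d)) (v : Fin d → EuclideanSpace ℝ (Fin d))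
    (hv1 : ∀ i, ‖v i‖ = 1) (hvpos : ∀ i j, 0 ≤ ⟪v i, v j⟫) :
    ∀ ε : ℝ, 0 < ε → ∃ δ : ℝ, 0 < δ ∧
      ∀ (a' : EuclideanSpace ℝ (Fin d)) (v' : Fin d → EuclideanSpace ℝ (Fin d)),
        LinearIndependent ℝ v' →
        (∀ i, ‖v' i‖ = 1) →
        (∀ i j, 0 < ⟪v' i, v' j⟫) →
        ‖a - a'‖ < δ →
        (∀ i, ‖v i - v' i‖ < δ) →
        ∀ w' : EuclideanSpace ℝ (Fin d), ‖w'‖ = 1 →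
          a' + w' ∈ convexHull ℝ
            (⋃ i, {x : EuclideanSpace ℝ (Fin d) | ∃ l : ℝ, 0 ≤ l ∧ x = a' + l • v' i}) →
          ∃ w : EuclideanSpace ℝ (Fin d), ‖w‖ = 1 ∧
            a + w ∈ convexHull ℝ
              (⋃ i, {x : EuclideanSpace ℝ (Fin d) | ∃ l : ℝ, 0 ≤ l ∧ x = a + l • v i}) ∧
            ‖w - w'‖ ≤ ε :=
  acute_cone_admissible_limit_general hd a v
end
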